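/- arXiv:1911.10515 — 8 statements merged into one kernel-verified Lean document; each statement's English description precedes it below -/
import Mathlib

section
/- If H is a triangle-free graph with at least three vertices and D is the set of vertices of H of degree at least two, then the intersection graph of the maximal induced stars of H is isomorphic to the square of the induced subgraph H[D]. -/
open SimpleGraph

/-- An induced star of `H` with center `v` and leaf set `L`: `L` is a nonempty
independent set of neighbors of `v`. -/
def IsStar {V : Type*} (H : SimpleGraph V) (v : V) (L : Set V) : Prop :=
  L.Nonempty ∧ (∀ u ∈ L, H.Adj v u) ∧ ∀ u ∈ L, ∀ w ∈ L, ¬ H.Adj u w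

/-- `S` is the vertex set of an induced star of `H`. -/
def IsStarSet {V : Type*} (H : SimpleGraph V) (S : Set V) : Prop :=
  ∃ v L, IsStar H v L ∧ S = insert v L

/-- `S` is the vertex set of a maximal induced star of `H`. -/
def IsMaxStarSet {V : Type*} (H : SimpleGraph V) (S : Set V) : Prop :=
  IsStarSet H S ∧ ∀ T, IsStarSet H T → S ⊆ T → S = T

/-- The set of (vertex sets of) maximal induced stars of `H`. -/
def maxStars {V : Type*} (H : SimpleGraph V) : Set (Set V) := {S | IsMaxStarSet H S}

/-- The star graph of `H`: the intersection graph of the maximal induced stars of `H`. -/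
def starGraph {V : Type*} (H : SimpleGraph V) : SimpleGraph ↥(maxStars H) :=
  SimpleGraph.fromRel fun S T => ((S : Set V) ∩ (T : Set V)).Nonempty

/-- The square of a graph: adjacency iff distance is positive and at most 2. -/
def squareGraph {V : Type*} (G : SimpleGraph V) : SimpleGraph V :=
  SimpleGraph.fromRel fun u v => G.Reachable u v ∧ G.dist u v ≤ 2

/-!
Every maximal induced star of a triangle-free graph `H` is a closed neighbourhood `N[v]`: a star
centred at `v` lies in `N[v]`, which is itself a star because `N(v)` is independent. Conversely
`N[v]` is maximal as soon as `v` has two neighbours, and if no component of `H` is a single edge,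
every maximal star has such a centre, which is then unique. Finally, for distinct `u` and `v`,
`N[u]` meets `N[v]` iff `u` and `v` are adjacent or have a common neighbour, which then has degree
at least two itself; so `v ↦ N[v]` is an isomorphism from the square of `H[D]` onto the star graph.
-/

section

variable {V : Type*} {G H : SimpleGraph V} {u v : V}

def closedNeighborSet (H : SimpleGraph V) (v : V) : Set V := insert v (H.neighborSet v)

lemma two_le_degree_iff_nontrivial [Fintype (H.neighborSet v)] :
    2 ≤ H.degree v ↔ (H.neighborSet v).Nontrivial := by
  rw [Nat.succ_le_iff, ← Set.toFinset_nontrivial, ← Finset.one_lt_card_iff_nontrivial]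
  rfl

lemma SimpleGraph.Connected.mem_of_forall_adj_mem (hconn : G.Connected) {S : Set V} (hu : u ∈ S)
    (hS : ∀ x y, x ∈ S → G.Adj x y → y ∈ S) (z : V) : z ∈ S := by
  induction (reachable_iff_reflTransGen u z).mp (hconn u z) with
  | refl => exact hu
  | tail _ hxy ih => exact hS _ _ ih hxy

lemma SimpleGraph.Connected.nontrivial_neighborSet_or [Fintype V] (hconn : H.Connected)
    (hcard : 3 ≤ Fintype.card V) (huv : H.Adj u v) :
    (H.neighborSet u).Nontrivial ∨ (H.neighborSet v).Nontrivial := by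
  classical
  by_contra! h
  have hclosed : ∀ x y, x ∈ ({u, v} : Set V) → H.Adj x y → y ∈ ({u, v} : Set V) := by
    rintro x y (rfl | rfl) hxy
    · exact Or.inr (h.1 hxy huv)
    · exact Or.inl (h.2 hxy huv.symm)
  have hall : (Finset.univ : Finset V) ⊆ {u, v} := fun z _ => by
    simpa using hconn.mem_of_forall_adj_mem (Set.mem_insert u _) hclosed z
  have := (Finset.card_le_card hall).trans (Finset.card_insert_le _ _)
  simp only [Finset.card_univ, Finset.card_singleton] at this
  omega

lemma edist_le_two_iff (huv : u ≠ v) :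
    G.edist u v ≤ 2 ↔ G.Adj u v ∨ (G.commonNeighbors u v).Nonempty := by
  rw [← not_lt, two_lt_edist_iff, Set.nonempty_iff_ne_empty]
  tauto

lemma reachable_and_dist_le_iff_edist_le {n : ℕ} :
    G.Reachable u v ∧ G.dist u v ≤ n ↔ G.edist u v ≤ n := by
  refine ⟨fun ⟨hr, hd⟩ => ?_, fun hd => ?_⟩
  · rw [← hr.coe_dist_eq_edist]
    exact_mod_cast hd
  · have hr : G.Reachable u v :=
      edist_ne_top_iff_reachable.mp (ne_top_of_le_ne_top (ENat.natCast_ne_top n) hd)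
    rw [← hr.coe_dist_eq_edist] at hd
    exact ⟨hr, by exact_mod_cast hd⟩

lemma squareGraph_adj :
    (squareGraph G).Adj u v ↔ u ≠ v ∧ (G.Adj u v ∨ (G.commonNeighbors u v).Nonempty) := by
  rw [squareGraph, fromRel_adj, reachable_and_dist_le_iff_edist_le,
    reachable_and_dist_le_iff_edist_le, edist_comm (u := v), or_self]
  exact and_congr_right edist_le_two_iff

lemma starGraph_adj_iff_inter_nonempty {S T : maxStars H} :
    (_root_.starGraph H).Adj S T ↔ S ≠ T ∧ ((S : Set V) ∩ T).Nonempty := by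
  rw [_root_.starGraph, fromRel_adj, Set.inter_comm (T : Set V), or_self]

lemma closedNeighborSet_inter_nonempty_iff (huv : u ≠ v) :
    (closedNeighborSet H u ∩ closedNeighborSet H v).Nonempty ↔
      H.Adj u v ∨ (H.commonNeighbors u v).Nonempty := by
  constructor
  · rintro ⟨x, rfl | hux, rfl | hvx⟩
    · exact absurd rfl huv
    · exact Or.inl hvx.symm
    · exact Or.inl hux
    · exact Or.inr ⟨x, hux, hvx⟩
  · rintro (h | ⟨x, hux, hvx⟩)
    · exact ⟨v, Or.inr h, Or.inl rfl⟩
    · exact ⟨x, Or.inr hux, Or.inr hvx⟩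

lemma induce_commonNeighbors_nonempty_iff {D : Set V}
    (hD : ∀ w, (H.neighborSet w).Nontrivial → w ∈ D) {a b : D} (hab : a ≠ b) :
    ((H.induce D).commonNeighbors a b).Nonempty ↔ (H.commonNeighbors a b).Nonempty := by
  constructor
  · rintro ⟨x, hax, hbx⟩
    exact ⟨x, hax, hbx⟩
  · rintro ⟨x, hax, hbx⟩
    have hx : x ∈ D := hD x ⟨a, hax.symm, b, hbx.symm, Subtype.coe_ne_coe.mpr hab⟩
    exact ⟨⟨x, hx⟩, hax, hbx⟩

lemma IsStar.subset_closedNeighborSet {L : Set V} (h : IsStar H v L) :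
    insert v L ⊆ closedNeighborSet H v :=
  Set.insert_subset_insert h.2.1

lemma isStarSet_closedNeighborSet (hH : H.CliqueFree 3) (hv : (H.neighborSet v).Nonempty) :
    IsStarSet H (closedNeighborSet H v) := by
  refine ⟨v, _, ⟨hv, fun _ hu => hu, fun x hx y hy => ?_⟩, rfl⟩
  obtain rfl | hxy := eq_or_ne x y
  · exact H.irrefl
  · exact isIndepSet_neighborSet_of_triangleFree H hH v hx hy hxy

lemma eq_of_closedNeighborSet_eq (hH : H.CliqueFree 3) (hu : (H.neighborSet u).Nontrivial)
    (h : closedNeighborSet H u = closedNeighborSet H v) : u = v := by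
  by_contra huv
  have huv' : H.Adj u v := (h ▸ Set.mem_insert v _ : v ∈ closedNeighborSet H u).resolve_left
    (Ne.symm huv)
  obtain ⟨x, hux, hxv⟩ := hu.exists_ne v
  have hvx : H.Adj v x :=
    (h ▸ Set.mem_insert_of_mem u hux : x ∈ closedNeighborSet H v).resolve_left hxv
  exact isIndepSet_neighborSet_of_triangleFree H hH u huv' hux hxv.symm hvx

lemma isMaxStarSet_closedNeighborSet (hH : H.CliqueFree 3) (hv : (H.neighborSet v).Nontrivial) :
    IsMaxStarSet H (closedNeighborSet H v) := by
  refine ⟨isStarSet_closedNeighborSet hH hv.nonempty, ?_⟩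
  rintro _ ⟨w, L, hL, rfl⟩ hsub
  obtain rfl | hvw := eq_or_ne v w
  · exact hsub.antisymm hL.subset_closedNeighborSet
  · -- `v` would be a leaf, adjacent to its neighbour `u ≠ w`, which is a leaf too
    obtain ⟨u, hu, huw⟩ := hv.exists_ne w
    have hvL : v ∈ L := (hsub (Set.mem_insert v _)).resolve_left hvw
    have huL : u ∈ L := (hsub (Set.mem_insert_of_mem v hu)).resolve_left huw
    exact (hL.2.2 v hvL u huL hu).elim

lemma IsMaxStarSet.exists_eq_closedNeighborSet (hH : H.CliqueFree 3) {S : Set V}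
    (hS : IsMaxStarSet H S) : ∃ v, (H.neighborSet v).Nonempty ∧ S = closedNeighborSet H v := by
  obtain ⟨⟨v, L, hL, rfl⟩, hmax⟩ := hS
  have hv : (H.neighborSet v).Nonempty := hL.1.mono hL.2.1
  exact ⟨v, hv, hmax _ (isStarSet_closedNeighborSet hH hv) hL.subset_closedNeighborSet⟩

lemma IsMaxStarSet.exists_eq_closedNeighborSet_of_nontrivial (hH : H.CliqueFree 3)
    (hedge : ∀ u v, H.Adj u v → (H.neighborSet u).Nontrivial ∨ (H.neighborSet v).Nontrivial)
    {S : Set V} (hS : IsMaxStarSet H S) :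
    ∃ v, (H.neighborSet v).Nontrivial ∧ S = closedNeighborSet H v := by
  obtain ⟨v, ⟨u, hvu⟩, rfl⟩ := hS.exists_eq_closedNeighborSet hH
  refine ⟨v, ?_, rfl⟩
  by_contra hv
  have hu := (hedge v u hvu).resolve_left hv
  have hsub : closedNeighborSet H v ⊆ closedNeighborSet H u := by
    rintro x (rfl | hvx)
    · exact Or.inr hvu.symm
    · exact Or.inl (Set.not_nontrivial_iff.mp hv hvx hvu)
  have heq := hS.2 _ (isStarSet_closedNeighborSet hH hu.nonempty) hsub
  exact H.ne_of_adj hvu (eq_of_closedNeighborSet_eq hH hu heq.symm).symm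

noncomputable def squareInduceIsoStarGraph (hH : H.CliqueFree 3)
    (hedge : ∀ u v, H.Adj u v → (H.neighborSet u).Nontrivial ∨ (H.neighborSet v).Nontrivial)
    (D : Set V) (hD : ∀ v, v ∈ D ↔ (H.neighborSet v).Nontrivial) :
    squareGraph (H.induce D) ≃g _root_.starGraph H :=
  let f : D → maxStars H :=
    fun v => ⟨closedNeighborSet H v, isMaxStarSet_closedNeighborSet hH ((hD v).mp v.2)⟩
  have hinj : f.Injective := fun a b hab =>
    Subtype.ext (eq_of_closedNeighborSet_eq hH ((hD a).mp a.2) (congrArg Subtype.val hab))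
  have hsurj : f.Surjective := by
    rintro ⟨S, hS⟩
    obtain ⟨v, hv, rfl⟩ := hS.exists_eq_closedNeighborSet_of_nontrivial hH hedge
    exact ⟨⟨v, (hD v).mpr hv⟩, rfl⟩
  { toEquiv := Equiv.ofBijective f ⟨hinj, hsurj⟩
    map_rel_iff' := fun {a b} => by
      change (_root_.starGraph H).Adj (f a) (f b) ↔ _
      rw [starGraph_adj_iff_inter_nonempty, squareGraph_adj, hinj.ne_iff]
      refine and_congr_right fun hab => ?_
      rw [induce_commonNeighbors_nonempty_iff (fun w => (hD w).mpr) hab, induce_adj]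
      exact closedNeighborSet_inter_nonempty_iff (Subtype.coe_ne_coe.mpr hab) }

end

/-- For a connected triangle-free graph `H` on at least three vertices, the star graph
of `H` is isomorphic to the square of the subgraph induced on the vertices of degree
at least two. -/
theorem stmt1 {V : Type*} [Fintype V] (H : SimpleGraph V) [DecidableRel H.Adj]
    (hH : H.CliqueFree 3) (hconn : H.Connected) (hcard : 3 ≤ Fintype.card V) :
    Nonempty (_root_.starGraph H ≃g squareGraph (H.induce {v : V | 2 ≤ H.degree v})) :=
  ⟨(squareInduceIsoStarGraph hH (fun _ _ huv => hconn.nontrivial_neighborSet_or hcard huv) _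
    fun _ => two_le_degree_iff_nontrivial).symm⟩
end

section
/- If H is a star-critical graph with no simplicial vertex, then |V(H)| ≤ |S(H)|. -/
/-!
Every vertex `v` that is not simplicial has two non-adjacent neighbours; extending them to a
maximal independent subset `L` of `N(v)` gives a maximal induced star `{v} ∪ L` with at least two
leaves. A star with two leaves is contained in no star with a different center, since the
neighbours of a leaf inside a star reduce to the center. Hence `v ↦ {v} ∪ L` is an injection from
`V(H)` into `S(H)`.
-/

open SimpleGraph

/-- A vertex of `H` is star-critical if removing it changes the star graph up to
isomorphism; `H` is star-critical if all its vertices are. -/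
def StarCritical {V : Type*} (H : SimpleGraph V) : Prop :=
  ∀ v : V, ¬ Nonempty (_root_.starGraph (H.induce ({v}ᶜ : Set V)) ≃g _root_.starGraph H)

namespace SimpleGraph

variable {V : Type*} {H : SimpleGraph V}

lemma IsIndepSet.not_adj {s : Set V} (hs : H.IsIndepSet s) {u w : V} (hu : u ∈ s)
    (hw : w ∈ s) : ¬ H.Adj u w :=
  fun hadj => hs hu hw hadj.ne hadj

lemma exists_indep_pair_of_not_isClique_neighborSet {v : V}
    (hv : ¬ H.IsClique (H.neighborSet v)) :
    ∃ a b, a ≠ b ∧ {a, b} ⊆ H.neighborSet v ∧ H.IsIndepSet {a, b} := by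
  simp only [isClique_iff, Set.Pairwise, not_forall] at hv
  obtain ⟨a, ha, b, hb, hab, hnadj⟩ := hv
  exact ⟨a, b, hab, Set.insert_subset ha (Set.singleton_subset_iff.mpr hb),
    Set.pairwise_pair.mpr fun _ => ⟨hnadj, fun h => hnadj h.symm⟩⟩

lemma exists_maximal_indep_neighbors_nontrivial [Finite V] {v : V}
    (hv : ¬ H.IsClique (H.neighborSet v)) :
    ∃ L, Maximal (fun L => L ⊆ H.neighborSet v ∧ H.IsIndepSet L) L ∧ L.Nontrivial := by
  obtain ⟨a, b, hab, hN, hind⟩ := exists_indep_pair_of_not_isClique_neighborSet hv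
  obtain ⟨L, habL, hmax⟩ := Finite.exists_le_maximal
    (p := fun L => L ⊆ H.neighborSet v ∧ H.IsIndepSet L) ⟨hN, hind⟩
  exact ⟨L, hmax, (Set.nontrivial_pair hab).mono habL⟩

end SimpleGraph

section Stars

variable {V : Type*} {H : SimpleGraph V}

lemma star_center_eq_of_insert_subset {v c : V} {L M : Set V} (hLv : L ⊆ H.neighborSet v)
    (hL : L.Nontrivial) (hM : H.IsIndepSet M) (hsub : insert v L ⊆ insert c M) : v = c := by
  by_contra hvc
  have hvM : v ∈ M := (hsub (Set.mem_insert v L)).resolve_left hvc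
  have hL_center : ∀ x ∈ L, x = c := fun x hx =>
    (hsub (Set.mem_insert_of_mem v hx)).resolve_right
      fun hxM => hM.not_adj hvM hxM (hLv hx)
  obtain ⟨a, ha, b, hb, hab⟩ := hL
  exact hab ((hL_center a ha).trans (hL_center b hb).symm)

lemma isMaxStarSet_insert {v : V} {L : Set V}
    (hmax : Maximal (fun L => L ⊆ H.neighborSet v ∧ H.IsIndepSet L) L) (hL : L.Nontrivial) :
    IsMaxStarSet H (insert v L) := by
  obtain ⟨hLv, hLind⟩ := hmax.prop
  refine ⟨⟨v, L, ⟨hL.nonempty, fun u hu => hLv hu, fun u hu w hw => hLind.not_adj hu hw⟩, rfl⟩,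
    ?_⟩
  rintro T ⟨c, M, ⟨-, hcM, hMind⟩, rfl⟩ hsub
  have hM : H.IsIndepSet M := fun u hu w hw _ => hMind u hu w hw
  obtain rfl := star_center_eq_of_insert_subset hLv hL hM hsub
  have hLM : L ⊆ M := fun x hx =>
    (hsub (Set.mem_insert_of_mem v hx)).resolve_left fun hxv => H.irrefl (hxv ▸ hLv hx)
  rw [hmax.eq_of_le ⟨fun u hu => hcM u hu, hM⟩ hLM]

end Stars

theorem stmt3_general {V : Type*} [Fintype V] (H : SimpleGraph V)
    (hsimp : ∀ v : V, ¬ H.IsClique (H.neighborSet v)) :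
    Fintype.card V ≤ (maxStars H).ncard := by
  choose L hmax hL using fun v => H.exists_maximal_indep_neighbors_nontrivial (hsimp v)
  let star : V → maxStars H := fun v => ⟨insert v (L v), isMaxStarSet_insert (hmax v) (hL v)⟩
  have hstar : Function.Injective star := fun v w hvw =>
    star_center_eq_of_insert_subset (hmax v).prop.1 (hL v) (hmax w).prop.2
      (congrArg Subtype.val hvw).le
  calc Fintype.card V = Nat.card V := Nat.card_eq_fintype_card.symm
    _ ≤ Nat.card (maxStars H) := Nat.card_le_card_of_injective star hstar
    _ = (maxStars H).ncard := Nat.card_coe_set_eq _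

/-- If `H` is star-critical and has no simplicial vertex, then `|V(H)| ≤ |S(H)|`. -/
theorem stmt3 {V : Type*} [Fintype V] (H : SimpleGraph V) (hcrit : StarCritical H)
    (hsimp : ∀ v : V, ¬ H.IsClique (H.neighborSet v)) :
    Fintype.card V ≤ (maxStars H).ncard :=
  stmt3_general H hsimp
end

section
/- For every graph H on n vertices with maximum degree Δ, the number of maximal induced stars of H is at most n·3^{Δ/3}. -/
lemma cube_le_three_pow : ∀ t : ℕ, t ^ 3 ≤ 3 ^ t := by
  intro t
  induction t with
  | zero => norm_num
  | succ n ih =>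
    rcases Nat.lt_or_ge n 3 with h | h
    · interval_cases n <;> norm_num
    · calc (n + 1) ^ 3 ≤ 3 * n ^ 3 := by nlinarith [sq_nonneg n, h]
        _ ≤ 3 * 3 ^ n := by omega
        _ = 3 ^ (n + 1) := by ring

lemma nat_le_rpow3 (t : ℕ) : (t : ℝ) ≤ (3 : ℝ) ^ ((t : ℝ) / 3) := by
  have h0 : (0 : ℝ) ≤ (3 : ℝ) ^ ((t : ℝ) / 3) := Real.rpow_nonneg (by norm_num) _
  have h3 : ((3 : ℝ) ^ ((t : ℝ) / 3)) ^ (3 : ℕ) = 3 ^ t := by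
    rw [← Real.rpow_natCast ((3 : ℝ) ^ ((t : ℝ) / 3)) 3, ← Real.rpow_mul (by norm_num)]
    push_cast
    rw [div_mul_cancel₀ _ (by norm_num : (3:ℝ) ≠ 0), Real.rpow_natCast]
  have hle : (t : ℝ) ^ (3:ℕ) ≤ ((3 : ℝ) ^ ((t : ℝ) / 3)) ^ (3:ℕ) := by
    rw [h3]; exact_mod_cast cube_le_three_pow t
  exact le_of_pow_le_pow_left₀ (by norm_num) h0 hle

open Finset in
/-- Maximal independent subsets of the finset `A` in the graph `H`. -/
noncomputable def MISet {V : Type*} [Fintype V] (H : SimpleGraph V) (A : Finset V) :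
    Finset (Finset V) := by
  classical
  exact A.powerset.filter (fun I =>
    (∀ u ∈ I, ∀ w ∈ I, ¬ H.Adj u w) ∧ ∀ w ∈ A, (∀ u ∈ I, ¬ H.Adj w u) → w ∈ I)

lemma mem_MISet {V : Type*} [Fintype V] {H : SimpleGraph V} {A I : Finset V} :
    I ∈ MISet H A ↔ I ⊆ A ∧ (∀ u ∈ I, ∀ w ∈ I, ¬ H.Adj u w) ∧
      (∀ w ∈ A, (∀ u ∈ I, ¬ H.Adj w u) → w ∈ I) := by
  classical
  simp [MISet, Finset.mem_filter, Finset.mem_powerset, and_assoc]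

lemma MISet_card_le {V : Type*} [Fintype V] (H : SimpleGraph V) [DecidableRel H.Adj]
    (A : Finset V) : ((MISet H A).card : ℝ) ≤ (3 : ℝ) ^ ((A.card : ℝ) / 3) := by
  classical
  induction A using Finset.strongInduction with
  | _ A ih => ?_
  rcases A.eq_empty_or_nonempty with rfl | hA
  · have h1 : (MISet H ∅).card ≤ 1 := by
      apply Finset.card_le_one.mpr
      intro I hI J hJ
      have hI' := (mem_MISet.mp hI).1
      have hJ' := (mem_MISet.mp hJ).1
      rw [Finset.subset_empty.mp hI', Finset.subset_empty.mp hJ']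
    calc ((MISet H ∅).card : ℝ) ≤ 1 := by exact_mod_cast h1
      _ = (3:ℝ) ^ ((0:ℝ)/3) := by norm_num
      _ = _ := by norm_num
  obtain ⟨v, hvA, hvmin⟩ := A.exists_min_image (fun u => (H.neighborFinset u ∩ A).card) hA
  set d := (H.neighborFinset v ∩ A).card with hd
  set C := insert v (H.neighborFinset v ∩ A) with hC
  have hCA : C ⊆ A := Finset.insert_subset hvA Finset.inter_subset_right
  have hvnot : v ∉ H.neighborFinset v ∩ A := by
    simp [SimpleGraph.mem_neighborFinset]
  have hCcard : C.card = d + 1 := Finset.card_insert_of_notMem hvnot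
  -- the deleted sets
  set B : V → Finset V := fun u => insert u (H.neighborFinset u ∩ A) with hB
  have hBA : ∀ u ∈ A, B u ⊆ A := fun u hu =>
    Finset.insert_subset hu Finset.inter_subset_right
  have hBcard : ∀ u, (B u).card = (H.neighborFinset u ∩ A).card + 1 := by
    intro u
    apply Finset.card_insert_of_notMem
    simp [SimpleGraph.mem_neighborFinset]
  -- cover
  have cover : MISet H A ⊆ C.biUnion (fun u =>
      (MISet H (A \ B u)).image (fun I => insert u I)) := by
    intro I hI
    obtain ⟨hIA, hind, hmax⟩ := mem_MISet.mp hI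
    -- I meets C
    have hmeet : ∃ u ∈ C, u ∈ I := by
      by_contra hcon
      push_neg at hcon
      have hvI : v ∉ I := hcon v (Finset.mem_insert_self _ _)
      have : v ∈ I := by
        apply hmax v hvA
        intro u huI
        intro hadj
        exact hcon u (Finset.mem_insert_of_mem
          (Finset.mem_inter.mpr ⟨(SimpleGraph.mem_neighborFinset _ _ _).mpr hadj,
            hIA huI⟩)) huI
      exact hvI this
    obtain ⟨u, huC, huI⟩ := hmeet
    refine Finset.mem_biUnion.mpr ⟨u, huC, ?_⟩
    refine Finset.mem_image.mpr ⟨I.erase u, ?_, Finset.insert_erase huI⟩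
    refine mem_MISet.mpr ⟨?_, ?_, ?_⟩
    · intro x hx
      obtain ⟨hxu, hxI⟩ := Finset.mem_erase.mp hx
      refine Finset.mem_sdiff.mpr ⟨hIA hxI, ?_⟩
      intro hxB
      rcases Finset.mem_insert.mp hxB with h | h
      · exact hxu h
      · exact hind u huI x hxI ((SimpleGraph.mem_neighborFinset _ _ _).mp
          (Finset.mem_inter.mp h).1)
    · intro a ha b hb
      exact hind a (Finset.mem_of_mem_erase ha) b (Finset.mem_of_mem_erase hb)
    · intro w hw hwind
      obtain ⟨hwA, hwB⟩ := Finset.mem_sdiff.mp hw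
      have hwu : w ≠ u := fun h => hwB (h ▸ Finset.mem_insert_self _ _)
      have : w ∈ I := by
        apply hmax w hwA
        intro x hxI
        rcases eq_or_ne x u with rfl | hxu
        · intro hadj
          exact hwB (Finset.mem_insert_of_mem (Finset.mem_inter.mpr
            ⟨(SimpleGraph.mem_neighborFinset _ _ _).mpr hadj.symm, hwA⟩))
        · exact hwind x (Finset.mem_erase.mpr ⟨hxu, hxI⟩)
      exact Finset.mem_erase.mpr ⟨hwu, this⟩
  -- cardinality chain
  have hdlecard : d + 1 ≤ A.card := hCcard ▸ Finset.card_le_card hCA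
  have step : ∀ u ∈ C, ((MISet H (A \ B u)).card : ℝ) ≤
      (3 : ℝ) ^ (((A.card : ℝ) - (d + 1)) / 3) := by
    intro u huC
    have huA : u ∈ A := hCA huC
    have hssub : A \ B u ⊂ A := by
      refine Finset.ssubset_iff_of_subset (Finset.sdiff_subset) |>.mpr ?_
      exact ⟨u, huA, fun h => (Finset.mem_sdiff.mp h).2 (Finset.mem_insert_self _ _)⟩
    have hcard : (A \ B u).card = A.card - (B u).card :=
      Finset.card_sdiff_of_subset (hBA u huA)
    have hdeg : d ≤ (H.neighborFinset u ∩ A).card := hvmin u huA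
    have hBle : (B u).card ≤ A.card := Finset.card_le_card (hBA u huA)
    have hcastle : ((A \ B u).card : ℝ) ≤ (A.card : ℝ) - (d + 1) := by
      have hdeg' : (d:ℝ) ≤ ((H.neighborFinset u ∩ A).card : ℝ) := by exact_mod_cast hdeg
      rw [hcard, Nat.cast_sub hBle, hBcard]
      push_cast
      linarith
    calc ((MISet H (A \ B u)).card : ℝ) ≤ (3:ℝ) ^ (((A \ B u).card : ℝ) / 3) := ih _ hssub
      _ ≤ (3:ℝ) ^ (((A.card : ℝ) - (d + 1)) / 3) := by
          apply Real.rpow_le_rpow_of_exponent_le (by norm_num)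
          linarith
  calc ((MISet H A).card : ℝ)
      ≤ ((C.biUnion (fun u => (MISet H (A \ B u)).image (fun I => insert u I))).card : ℝ) := by
        exact_mod_cast Finset.card_le_card cover
    _ ≤ ∑ u ∈ C, (((MISet H (A \ B u)).image (fun I => insert u I)).card : ℝ) := by
        exact_mod_cast Finset.card_biUnion_le
    _ ≤ ∑ u ∈ C, ((MISet H (A \ B u)).card : ℝ) := by
        apply Finset.sum_le_sum
        intro u _
        exact_mod_cast Finset.card_image_le
    _ ≤ ∑ u ∈ C, (3:ℝ) ^ (((A.card : ℝ) - (d + 1)) / 3) := Finset.sum_le_sum step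
    _ = (d + 1 : ℝ) * (3:ℝ) ^ (((A.card : ℝ) - (d + 1)) / 3) := by
        rw [Finset.sum_const, hCcard]; push_cast; ring
    _ ≤ (3:ℝ) ^ (((d:ℝ) + 1) / 3) * (3:ℝ) ^ (((A.card : ℝ) - (d + 1)) / 3) := by
        apply mul_le_mul_of_nonneg_right _ (Real.rpow_nonneg (by norm_num) _)
        have := nat_le_rpow3 (d + 1)
        push_cast at this
        exact this
    _ = (3:ℝ) ^ ((A.card : ℝ) / 3) := by
        rw [← Real.rpow_add (by norm_num)]
        ring_nf



open SimpleGraph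

lemma maxStar_exists {V : Type*} [Fintype V] (H : SimpleGraph V) [DecidableRel H.Adj]
    {S : Set V} (hS : S ∈ maxStars H) :
    ∃ (v : V) (L : Finset V), S = insert v ↑L ∧ L ∈ MISet H (H.neighborFinset v) := by
  classical
  obtain ⟨⟨v, Ls, hstar, rfl⟩, hmax⟩ := hS
  have hfin : Ls.Finite := Set.toFinite Ls
  refine ⟨v, hfin.toFinset, by rw [Set.Finite.coe_toFinset], ?_⟩
  rw [mem_MISet]
  refine ⟨?_, ?_, ?_⟩
  · intro x hx
    have hxL : x ∈ Ls := hfin.mem_toFinset.mp hx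
    exact (H.mem_neighborFinset _ _).mpr (hstar.2.1 x hxL)
  · intro a ha b hb
    exact hstar.2.2 a (hfin.mem_toFinset.mp ha) b (hfin.mem_toFinset.mp hb)
  · intro w hw hwind
    have hadj : H.Adj v w := (H.mem_neighborFinset _ _).mp hw
    have hwind' : ∀ u ∈ Ls, ¬ H.Adj w u := fun u hu =>
      hwind u (hfin.mem_toFinset.mpr hu)
    have hT : IsStarSet H (insert v (insert w Ls)) := by
      refine ⟨v, insert w Ls, ⟨⟨w, Set.mem_insert _ _⟩, ?_, ?_⟩, rfl⟩
      · intro u hu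
        rcases hu with rfl | hu
        · exact hadj
        · exact hstar.2.1 u hu
      · intro a ha b hb
        rcases ha with rfl | ha <;> rcases hb with rfl | hb
        · exact H.irrefl
        · exact hwind' b hb
        · exact fun h => hwind' a ha h.symm
        · exact hstar.2.2 a ha b hb
    have hsub : insert v Ls ⊆ insert v (insert w Ls) := by
      intro x hx
      rcases hx with rfl | hx
      · exact Set.mem_insert _ _
      · exact Set.mem_insert_of_mem _ (Set.mem_insert_of_mem _ hx)
    have heq := hmax _ hT hsub
    have hwmem : w ∈ insert v Ls := by
      rw [heq]; exact Set.mem_insert_of_mem _ (Set.mem_insert _ _)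
    rcases hwmem with rfl | hwL
    · exact absurd hadj H.irrefl
    · exact hfin.mem_toFinset.mpr hwL

/-- A graph on `n` vertices with maximum degree `Δ` has at most `n · 3^(Δ/3)`
maximal induced stars. -/
theorem stmt4 {V : Type*} [Fintype V] (H : SimpleGraph V) [DecidableRel H.Adj] :
    ((maxStars H).ncard : ℝ) ≤
      (Fintype.card V : ℝ) * (3 : ℝ) ^ ((H.maxDegree : ℝ) / 3) := by
  classical
  set g : V × Finset V → Set V := fun p => insert p.1 ↑p.2 with hg
  set T : Finset (V × Finset V) :=
    Finset.univ.biUnion (fun v => (MISet H (H.neighborFinset v)).image (fun L => (v, L)))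
    with hT
  have hsub : maxStars H ⊆ ↑(T.image g) := by
    intro S hS
    obtain ⟨v, L, rfl, hL⟩ := maxStar_exists H hS
    refine Finset.mem_coe.mpr (Finset.mem_image.mpr ⟨(v, L), ?_, rfl⟩)
    exact Finset.mem_biUnion.mpr ⟨v, Finset.mem_univ v, Finset.mem_image_of_mem _ hL⟩
  have h1 : (maxStars H).ncard ≤ (T.image g).card := by
    calc (maxStars H).ncard ≤ (↑(T.image g) : Set (Set V)).ncard :=
          Set.ncard_le_ncard hsub (Finset.finite_toSet _)
      _ = (T.image g).card := Set.ncard_coe_finset _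
  have h2 : T.card ≤ ∑ v : V, (MISet H (H.neighborFinset v)).card := by
    refine le_trans Finset.card_biUnion_le ?_
    exact Finset.sum_le_sum fun _ _ => Finset.card_image_le
  have h3 : ∀ v : V, ((MISet H (H.neighborFinset v)).card : ℝ) ≤
      (3 : ℝ) ^ ((H.maxDegree : ℝ) / 3) := by
    intro v
    calc ((MISet H (H.neighborFinset v)).card : ℝ)
        ≤ (3 : ℝ) ^ (((H.neighborFinset v).card : ℝ) / 3) := MISet_card_le H _
      _ ≤ (3 : ℝ) ^ ((H.maxDegree : ℝ) / 3) := by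
          apply Real.rpow_le_rpow_of_exponent_le (by norm_num)
          have : H.degree v ≤ H.maxDegree := H.degree_le_maxDegree v
          have h' : ((H.degree v : ℕ) : ℝ) ≤ (H.maxDegree : ℝ) := by exact_mod_cast this
          rw [SimpleGraph.card_neighborFinset_eq_degree]
          linarith
  calc ((maxStars H).ncard : ℝ)
      ≤ ((T.image g).card : ℝ) := by exact_mod_cast h1
    _ ≤ (T.card : ℝ) := by exact_mod_cast Finset.card_image_le
    _ ≤ ((∑ v : V, (MISet H (H.neighborFinset v)).card : ℕ) : ℝ) := by exact_mod_cast h2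
    _ = ∑ v : V, ((MISet H (H.neighborFinset v)).card : ℝ) := by push_cast; rfl
    _ ≤ ∑ _v : V, (3 : ℝ) ^ ((H.maxDegree : ℝ) / 3) :=
        Finset.sum_le_sum fun v _ => h3 v
    _ = (Fintype.card V : ℝ) * (3 : ℝ) ^ ((H.maxDegree : ℝ) / 3) := by
        rw [Finset.sum_const, Finset.card_univ, nsmul_eq_mul]
end

section
/- If G is the star graph of some connected graph H and |V(G)| ≥ 2, then G has no cut-vertex (G is 2-connected). -/
open SimpleGraph

/-!
Every edge of `H` lies in a maximal star, so a walk in the connected graph `H` passes through a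
chain of pairwise intersecting maximal stars; this makes the star graph connected. After deleting a
maximal star `X` with center `c`, every remaining star `A` meeting `X` still meets a remaining star
containing `c`: if `c ∉ A`, then `A` contains a leaf `u` of `X` and a neighbour `z ∉ X` of `u`, and
`{c, z}` (if `c ∼ z`) or the cherry `u; c, z` extends to a maximal star other than `X`. So the
remaining stars meeting `X` form one connected block, and gluing `X` onto each of them reduces the
claim to the first argument.
-/

open SimpleGraph

lemma preconnected_of_edge_cover {V ι : Type*} {H : SimpleGraph V} {K : SimpleGraph ι}
    (f : ι → Set V) (hH : H.Preconnected) (hf : ∀ i, (f i).Nonempty)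
    (hcover : ∀ ⦃u v⦄, H.Adj u v → ∃ i, u ∈ f i ∧ v ∈ f i)
    (hK : ∀ i j, (f i ∩ f j).Nonempty → K.Reachable i j) : K.Preconnected := by
  have walk : ∀ {s t} (p : H.Walk s t) (i j), s ∈ f i → t ∈ f j → K.Reachable i j := by
    intro s t p
    induction p with
    | nil => exact fun i j hi hj => hK i j ⟨_, hi, hj⟩
    | cons hadj _ ih =>
      intro i j hi hj
      obtain ⟨k, hk, hk'⟩ := hcover hadj
      exact (hK i k ⟨_, hi, hk⟩).trans (ih k j hk' hj)
  intro i j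
  obtain ⟨s, hs⟩ := hf i
  obtain ⟨t, ht⟩ := hf j
  exact walk (hH s t).some i j hs ht

namespace IsStarSet

variable {V : Type*} {H : SimpleGraph V} {S : Set V}

lemma nonempty (h : IsStarSet H S) : S.Nonempty := by
  obtain ⟨v, L, _, rfl⟩ := h
  exact Set.insert_nonempty v L

lemma exists_adj (h : IsStarSet H S) {u : V} (hu : u ∈ S) : ∃ z ∈ S, H.Adj u z := by
  obtain ⟨v, L, ⟨⟨l, hl⟩, hadj, _⟩, rfl⟩ := h
  rcases hu with rfl | huL
  · exact ⟨l, Set.mem_insert_of_mem _ hl, hadj l hl⟩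
  · exact ⟨v, Set.mem_insert _ _, (hadj u huL).symm⟩

lemma exists_maxStars_superset [Finite V] (h : IsStarSet H S) : ∃ M ∈ maxStars H, S ⊆ M := by
  obtain ⟨M, hSM, hM⟩ := Finite.exists_le_maximal (p := IsStarSet H) h
  exact ⟨M, ⟨hM.prop, fun T hT hMT => le_antisymm hMT (hM.2 hT hMT)⟩, hSM⟩

end IsStarSet

section Stars

variable {V : Type*} {H : SimpleGraph V}

lemma isStarSet_pair {a b : V} (h : H.Adj a b) : IsStarSet H {a, b} :=
  ⟨a, {b}, ⟨Set.singleton_nonempty b, by simpa using h, by simp⟩, rfl⟩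

lemma isStarSet_cherry {u a b : V} (ha : H.Adj u a) (hb : H.Adj u b) (hab : ¬ H.Adj a b) :
    IsStarSet H {u, a, b} := by
  refine ⟨u, {a, b}, ⟨Set.insert_nonempty a {b}, by simp [ha, hb], ?_⟩, rfl⟩
  simp only [Set.mem_insert_iff, Set.mem_singleton_iff]
  rintro x (rfl | rfl) y (rfl | rfl)
  exacts [H.irrefl, hab, fun h => hab h.symm, H.irrefl]

lemma exists_maxStars_mem_mem [Finite V] {a b : V} (h : H.Adj a b) :
    ∃ M ∈ maxStars H, a ∈ M ∧ b ∈ M := by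
  obtain ⟨M, hM, hsub⟩ := (isStarSet_pair h).exists_maxStars_superset
  exact ⟨M, hM, hsub (by simp), hsub (by simp)⟩

lemma exists_maxStars_center_mem_inter [Finite V] {c : V} {L X A : Set V} (hc : IsStar H c L)
    (hX : X = insert c L) (hA : A ∈ maxStars H) (hAX : A ≠ X) (hAX' : (A ∩ X).Nonempty) :
    ∃ N ∈ maxStars H, N ≠ X ∧ c ∈ N ∧ (N ∩ A).Nonempty := by
  subst hX
  by_cases hcA : c ∈ A
  · exact ⟨A, hA, hAX, hcA, c, hcA, hcA⟩
  obtain ⟨u, huA, huX⟩ := hAX'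
  have huL : u ∈ L := huX.resolve_left (by rintro rfl; exact hcA huA)
  obtain ⟨z, hzA, huz⟩ := hA.1.exists_adj huA
  have hzX : z ∉ insert c L := by
    rintro (rfl | hzL)
    exacts [hcA hzA, hc.2.2 u huL z hzL huz]
  obtain ⟨S, hS, hcS, hzS⟩ : ∃ S, IsStarSet H S ∧ c ∈ S ∧ z ∈ S := by
    by_cases hcz : H.Adj c z
    · exact ⟨_, isStarSet_pair hcz, by simp, by simp⟩
    · exact ⟨_, isStarSet_cherry (hc.2.1 u huL).symm huz hcz, by simp, by simp⟩
  obtain ⟨N, hN, hSN⟩ := hS.exists_maxStars_superset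
  exact ⟨N, hN, fun h => hzX (h ▸ hSN hzS), hSN hcS, z, hSN hzS, hzA⟩

lemma starGraph_adj {A B : maxStars H} :
    (_root_.starGraph H).Adj A B ↔ A ≠ B ∧ ((A : Set V) ∩ B).Nonempty := by
  rw [_root_.starGraph, fromRel_adj, Set.inter_comm (B : Set V), or_self]

lemma starGraph_reachable_of_inter {A B : maxStars H} (h : ((A : Set V) ∩ B).Nonempty) :
    (_root_.starGraph H).Reachable A B := by
  by_cases hAB : A = B
  · exact hAB ▸ Reachable.refl A
  · exact (starGraph_adj.2 ⟨hAB, h⟩).reachable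

lemma induce_starGraph_reachable_of_inter {s : Set (maxStars H)} {A B : s}
    (h : (A.1.1 ∩ B.1.1).Nonempty) : ((_root_.starGraph H).induce s).Reachable A B := by
  by_cases hAB : A = B
  · exact hAB ▸ Reachable.refl A
  · exact (induce_adj.2 (starGraph_adj.2 ⟨fun h' => hAB (Subtype.ext h'), h⟩)).reachable

lemma starGraph_preconnected [Finite V] (hH : H.Preconnected) :
    (_root_.starGraph H).Preconnected :=
  preconnected_of_edge_cover Subtype.val hH (fun A => A.2.1.nonempty)
    (fun _ _ huv => let ⟨M, hM, hu, hv⟩ := exists_maxStars_mem_mem huv; ⟨⟨M, hM⟩, hu, hv⟩)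
    (fun _ _ h => starGraph_reachable_of_inter h)

lemma induce_compl_singleton_reachable_of_inter [Finite V] {x : maxStars H}
    {A B : ({x}ᶜ : Set (maxStars H))} (hA : (A.1.1 ∩ x).Nonempty) (hB : (B.1.1 ∩ x).Nonempty) :
    ((_root_.starGraph H).induce {x}ᶜ).Reachable A B := by
  obtain ⟨c, L, hc, hx⟩ := x.2.1
  have toCenter : ∀ A : ({x}ᶜ : Set (maxStars H)), (A.1.1 ∩ x).Nonempty →
      ∃ N : ({x}ᶜ : Set (maxStars H)), c ∈ N.1.1 ∧ (N.1.1 ∩ A.1.1).Nonempty := by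
    intro A hA
    obtain ⟨N, hN, hNx, hcN, hNA⟩ := exists_maxStars_center_mem_inter hc hx A.1.2
      (fun h => A.2 (Subtype.ext h)) hA
    exact ⟨⟨⟨N, hN⟩, fun h => hNx (congrArg Subtype.val h)⟩, hcN, hNA⟩
  obtain ⟨N, hcN, hNA⟩ := toCenter A hA
  obtain ⟨N', hcN', hN'B⟩ := toCenter B hB
  rw [Set.inter_comm] at hNA
  exact ((induce_starGraph_reachable_of_inter hNA).trans
    (induce_starGraph_reachable_of_inter ⟨c, hcN, hcN'⟩)).trans
    (induce_starGraph_reachable_of_inter hN'B)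

lemma induce_compl_singleton_starGraph_connected [Finite V] (hH : H.Preconnected)
    [Nontrivial (maxStars H)] (x : maxStars H) :
    ((_root_.starGraph H).induce {x}ᶜ).Connected := by
  obtain ⟨y, hxy⟩ := (starGraph_preconnected hH).exists_adj_of_nontrivial x
  obtain ⟨hxy, hyx⟩ := starGraph_adj.1 hxy
  let y' : ({x}ᶜ : Set (maxStars H)) := ⟨y, fun h => hxy h.symm⟩
  rw [Set.inter_comm] at hyx
  let f : ({x}ᶜ : Set (maxStars H)) → Set V := fun B => B.1.1 ∪ {v ∈ x.1 | (B.1.1 ∩ x).Nonempty}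
  have hcover : ∀ ⦃u v⦄, H.Adj u v → ∃ B, u ∈ f B ∧ v ∈ f B := by
    intro u v huv
    by_cases hux : u ∈ x.1 ∧ v ∈ x.1
    · exact ⟨y', Or.inr ⟨hux.1, hyx⟩, Or.inr ⟨hux.2, hyx⟩⟩
    obtain ⟨M, hM, huM, hvM⟩ := exists_maxStars_mem_mem huv
    have hMx : M ≠ x.1 := by rintro rfl; exact hux ⟨huM, hvM⟩
    exact ⟨⟨⟨M, hM⟩, fun h => hMx (congrArg Subtype.val h)⟩, Or.inl huM, Or.inl hvM⟩
  have hK : ∀ A B, (f A ∩ f B).Nonempty → ((_root_.starGraph H).induce {x}ᶜ).Reachable A B := by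
    rintro A B ⟨v, hvA | ⟨hvx, hA⟩, hvB | ⟨hvx', hB⟩⟩
    · exact induce_starGraph_reachable_of_inter ⟨v, hvA, hvB⟩
    · exact induce_compl_singleton_reachable_of_inter ⟨v, hvA, hvx'⟩ hB
    · exact induce_compl_singleton_reachable_of_inter hA ⟨v, hvB, hvx⟩
    · exact induce_compl_singleton_reachable_of_inter hA hB
  have : Nonempty ({x}ᶜ : Set (maxStars H)) := ⟨y'⟩
  exact ⟨preconnected_of_edge_cover f hH
    (fun B => B.1.2.1.nonempty.mono Set.subset_union_left) hcover hK⟩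

end Stars

/-- The star graph of a connected graph, when it has at least two vertices,
is connected and has no cut-vertex. -/
theorem stmt6 {V : Type*} [Fintype V] (H : SimpleGraph V) (hH : H.Connected)
    (h2 : 2 ≤ (maxStars H).ncard) :
    (_root_.starGraph H).Connected ∧
      ∀ x : ↥(maxStars H),
        ((_root_.starGraph H).induce ({x}ᶜ : Set ↥(maxStars H))).Connected := by
  have : Nontrivial (maxStars H) := (Set.one_lt_ncard_iff_nontrivial.1 h2).coe_sort
  exact ⟨⟨starGraph_preconnected hH.preconnected⟩,
    induce_compl_singleton_starGraph_connected hH.preconnected⟩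
end

section
/- If H is a graph of diameter k whose star graph G is connected and not a complete graph, then the diameter of G is at most ⌊k/2⌋ + 2. -/
open SimpleGraph

/-!
The two ends of a walk of length two in `H` always lie in a common maximal star: they are equal,
adjacent, or the two leaves of an induced star centred at the middle vertex. Walking along a
geodesic of `H` from a vertex of `S` to a vertex of `T` two edges at a time therefore gives a
chain of pairwise intersecting maximal stars, so `S` and `T` are at distance at most
`⌈d/2⌉ + 1 ≤ ⌊k/2⌋ + 2` in the star graph, where `d ≤ k` is the length of the geodesic.
-/

section

variable {V : Type*} {H : SimpleGraph V}

lemma IsStarSet.exists_maxStars_superset_s10 [Finite V] {S : Set V} (hS : IsStarSet H S) :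
    ∃ M : maxStars H, S ⊆ M := by
  obtain ⟨M, ⟨hM, hSM⟩, hmax⟩ :=
    Set.Finite.exists_maximalFor id {T | IsStarSet H T ∧ S ⊆ T} (Set.toFinite _) ⟨S, hS, le_rfl⟩
  exact ⟨⟨M, hM, fun T hT hMT => hMT.antisymm (hmax ⟨hT, hSM.trans hMT⟩ hMT)⟩, hSM⟩

lemma isStarSet_of_adj {u w : V} (h : H.Adj u w) : IsStarSet H {u, w} :=
  ⟨u, {w}, ⟨Set.singleton_nonempty w, by simpa using h, by simp⟩, rfl⟩

lemma isStarSet_of_adj_of_adj {u v w : V} (huv : H.Adj u v) (hvw : H.Adj v w) (hne : u ≠ w)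
    (hnadj : ¬ H.Adj u w) : IsStarSet H {v, u, w} := by
  refine ⟨v, {u, w}, ⟨Set.insert_nonempty u _, ?_, ?_⟩, rfl⟩
  · rintro x (rfl | rfl)
    exacts [huv.symm, hvw]
  · rintro x (rfl | rfl) y (rfl | rfl)
    exacts [H.irrefl, hnadj, fun h => hnadj h.symm, H.irrefl]

lemma exists_maxStars_mem_mem_of_adj [Finite V] {u w : V} (h : H.Adj u w) :
    ∃ M : maxStars H, u ∈ (M : Set V) ∧ w ∈ (M : Set V) := by
  obtain ⟨M, hM⟩ := (isStarSet_of_adj h).exists_maxStars_superset_s10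
  exact ⟨M, hM (by simp), hM (by simp)⟩

lemma exists_maxStars_mem_mem_of_adj_of_adj [Finite V] {u v w : V} (huv : H.Adj u v)
    (hvw : H.Adj v w) : ∃ M : maxStars H, u ∈ (M : Set V) ∧ w ∈ (M : Set V) := by
  by_cases hne : u = w
  · subst hne
    obtain ⟨M, hM, -⟩ := exists_maxStars_mem_mem_of_adj huv
    exact ⟨M, hM, hM⟩
  by_cases hadj : H.Adj u w
  · exact exists_maxStars_mem_mem_of_adj hadj
  obtain ⟨M, hM⟩ := (isStarSet_of_adj_of_adj huv hvw hne hadj).exists_maxStars_superset_s10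
  exact ⟨M, hM (by simp), hM (by simp)⟩

lemma nonempty_of_mem_maxStars {S : Set V} (hS : S ∈ maxStars H) : S.Nonempty := by
  obtain ⟨⟨v, L, -, rfl⟩, -⟩ := hS
  exact Set.insert_nonempty v L

lemma starGraph_edist_le_one {S T : maxStars H} (h : ((S : Set V) ∩ T).Nonempty) :
    (_root_.starGraph H).edist S T ≤ 1 := by
  rw [edist_le_one_iff_adj_or_eq, or_iff_not_imp_right]
  intro hST
  simpa [_root_.starGraph] using And.intro hST (Or.inl h)

theorem starGraph_edist_le_of_walk [Finite V] :
    ∀ {u w : V} (p : H.Walk u w) {S T : maxStars H}, u ∈ (S : Set V) → w ∈ (T : Set V) →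
      (_root_.starGraph H).edist S T ≤ ((p.length + 1) / 2 + 1 : ℕ)
  | _, _, .nil, _, _, hu, hw => by
    simpa using starGraph_edist_le_one ⟨_, hu, hw⟩
  | _, _, .cons h .nil, S, T, hu, hw => by
    obtain ⟨M, huM, hwM⟩ := exists_maxStars_mem_mem_of_adj h
    calc (_root_.starGraph H).edist S T
        ≤ (_root_.starGraph H).edist S M + (_root_.starGraph H).edist M T :=
          SimpleGraph.edist_triangle
      _ ≤ 1 + 1 := add_le_add (starGraph_edist_le_one ⟨_, hu, huM⟩)
          (starGraph_edist_le_one ⟨_, hwM, hw⟩)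
      _ = (((Walk.cons h .nil).length + 1) / 2 + 1 : ℕ) := by simp [one_add_one_eq_two]
  | _, _, .cons h (.cons h' q), S, T, hu, hw => by
    obtain ⟨M, huM, hvM⟩ := exists_maxStars_mem_mem_of_adj_of_adj h h'
    calc (_root_.starGraph H).edist S T
        ≤ (_root_.starGraph H).edist S M + (_root_.starGraph H).edist M T :=
          SimpleGraph.edist_triangle
      _ ≤ 1 + ((q.length + 1) / 2 + 1 : ℕ) := add_le_add (starGraph_edist_le_one ⟨_, hu, huM⟩)
          (starGraph_edist_le_of_walk q hvM hw)
      _ = (((Walk.cons h (.cons h' q)).length + 1) / 2 + 1 : ℕ) := by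
        simp only [Walk.length_cons]
        norm_cast
        omega

end

theorem stmt10_general {V : Type*} [Fintype V] (H : SimpleGraph V) (k : ℕ)
    (hH : H.Connected) (hdiam : H.diam = k) :
    (_root_.starGraph H).diam ≤ k / 2 + 2 := by
  have hdist : ∀ u w : V, H.dist u w ≤ k := by
    have := hH.nonempty
    exact fun u w => hdiam ▸ dist_le_diam (H.connected_iff_ediam_ne_top.mp hH)
  suffices (_root_.starGraph H).ediam ≤ (k / 2 + 2 : ℕ) from
    ENat.toNat_le_of_le_natCast this
  refine ediam_le_iff.mpr fun S T => ?_
  obtain ⟨u, hu⟩ := nonempty_of_mem_maxStars S.2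
  obtain ⟨w, hw⟩ := nonempty_of_mem_maxStars T.2
  obtain ⟨p, hp⟩ := hH.exists_walk_length_eq_dist u w
  refine (starGraph_edist_le_of_walk p hu hw).trans ?_
  have := hdist u w
  norm_cast
  omega

/-- If `H` has diameter `k` and its star graph is connected and not complete, then
the star graph has diameter at most `⌊k/2⌋ + 2`. -/
theorem stmt10 {V : Type*} [Fintype V] (H : SimpleGraph V) (k : ℕ)
    (hH : H.Connected) (hdiam : H.diam = k)
    (hGconn : (_root_.starGraph H).Connected)
    (hnc : ∃ S T : ↥(maxStars H), S ≠ T ∧ ¬ (_root_.starGraph H).Adj S T) :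
    (_root_.starGraph H).diam ≤ k / 2 + 2 :=
  stmt10_general H k hH hdiam
end

section
/- If H is an induced subgraph of H', then |S(H)| ≤ |S(H')|: every maximal induced star of H either remains a maximal induced star of H' or extends to one, and this assignment from S(H) to S(H') is injective when H' = H + one vertex. -/
open SimpleGraph

/-!
A maximal induced star `S` of `H[s]` is recovered from any induced star `T ⊇ S` of `H` as
`T ∩ s`: the edge of `S` forces the center of `T` into `s`, so `T ∩ s` is again an induced star
of `H[s]`, and maximality of `S` gives `S = T ∩ s`. Hence sending `S` to any maximal induced star
of `H` containing it is injective, and when `s = V ∖ {y}` the star `T` is `S` or `S ∪ {y}`.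
-/

section

variable {V : Type*} {H : SimpleGraph V}

theorem isMaxStarSet_iff_maximal {S : Set V} : IsMaxStarSet H S ↔ Maximal (IsStarSet H) S :=
  ⟨fun h => ⟨h.1, fun T hT hST => (h.2 T hT hST).ge⟩,
    fun h => ⟨h.1, fun _ hT hST => hST.antisymm (h.2 hT hST)⟩⟩

theorem IsStarSet.exists_isMaxStarSet_superset [Finite V] {S : Set V} (h : IsStarSet H S) :
    ∃ T, IsMaxStarSet H T ∧ S ⊆ T := by
  obtain ⟨T, hST, hT⟩ := (Set.toFinite {T | IsStarSet H T}).exists_le_maximal h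
  exact ⟨T, isMaxStarSet_iff_maximal.2 hT, hST⟩

theorem IsStarSet.exists_adj_s13 {S : Set V} (h : IsStarSet H S) : ∃ a ∈ S, ∃ b ∈ S, H.Adj a b := by
  obtain ⟨v, L, ⟨⟨u, hu⟩, hadj, -⟩, rfl⟩ := h
  exact ⟨v, Set.mem_insert _ _, u, Set.mem_insert_of_mem _ hu, hadj u hu⟩

theorem IsStarSet.image_val {s : Set V} {S : Set s} (h : IsStarSet (H.induce s) S) :
    IsStarSet H (Subtype.val '' S) := by
  obtain ⟨v, L, ⟨hne, hadj, hind⟩, rfl⟩ := h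
  refine ⟨v, Subtype.val '' L, ⟨hne.image _, ?_, ?_⟩, Set.image_insert_eq⟩
  · rintro _ ⟨u, hu, rfl⟩
    exact hadj u hu
  · rintro _ ⟨u, hu, rfl⟩ _ ⟨w, hw, rfl⟩
    exact hind u hu w hw

theorem IsStarSet.preimage_val {s T : Set V} (hT : IsStarSet H T) {a b : V}
    (ha : a ∈ s ∩ T) (hb : b ∈ s ∩ T) (hab : H.Adj a b) :
    IsStarSet (H.induce s) (Subtype.val ⁻¹' T) := by
  obtain ⟨c, L, ⟨-, hadj, hind⟩, rfl⟩ := hT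
  obtain ⟨hc, u, hus, huL⟩ : c ∈ s ∧ ∃ u ∈ s, u ∈ L := by
    rcases ha with ⟨has, rfl | haL⟩ <;> rcases hb with ⟨hbs, rfl | hbL⟩
    · exact absurd hab H.irrefl
    · exact ⟨has, b, hbs, hbL⟩
    · exact ⟨hbs, a, has, haL⟩
    · exact absurd hab (hind a haL b hbL)
  refine ⟨⟨c, hc⟩, Subtype.val ⁻¹' L, ⟨⟨⟨u, hus⟩, huL⟩, fun x hx => hadj _ hx,
    fun x hx w hw => hind _ hx _ hw⟩, ?_⟩
  ext ⟨x, hx⟩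
  simp [Subtype.ext_iff]

theorem IsMaxStarSet.inter_eq_image_val {s T : Set V} {S : Set s}
    (hS : IsMaxStarSet (H.induce s) S) (hT : IsStarSet H T) (hST : Subtype.val '' S ⊆ T) :
    s ∩ T = Subtype.val '' S := by
  obtain ⟨a, ha, b, hb, hab⟩ := hS.1.exists_adj_s13
  have hpre := hT.preimage_val ⟨a.2, hST ⟨a, ha, rfl⟩⟩ ⟨b.2, hST ⟨b, hb, rfl⟩⟩ hab
  rw [← Subtype.image_preimage_coe, hS.2 _ hpre fun x hx => hST ⟨x, hx, rfl⟩]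

theorem exists_injective_maxStars_induce [Finite V] (s : Set V) :
    ∃ f : maxStars (H.induce s) → maxStars H,
      Function.Injective f ∧ ∀ S, s ∩ (f S : Set V) = Subtype.val '' (S : Set s) := by
  have hext (S : maxStars (H.induce s)) : ∃ T : maxStars H, Subtype.val '' (S : Set s) ⊆ T := by
    obtain ⟨T, hT, hST⟩ := S.2.1.image_val.exists_isMaxStarSet_superset
    exact ⟨⟨T, hT⟩, hST⟩
  choose f hf using hext
  have hrecover (S) : s ∩ (f S : Set V) = Subtype.val '' (S : Set s) :=
    S.2.inter_eq_image_val (f S).2.1 (hf S)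
  refine ⟨f, fun S₁ S₂ h => Subtype.ext ?_, hrecover⟩
  apply Set.image_injective.2 Subtype.val_injective
  rw [← hrecover, ← hrecover, h]

end

/-- If `H` is an induced subgraph of `H'` then `|S(H)| ≤ |S(H')|`; moreover when
`H' = H + y`, every maximal star of `H` remains maximal or extends by `y`, and this
assignment is injective. -/
theorem stmt13 {V' : Type*} [Fintype V'] (H' : SimpleGraph V') (s : Set V') :
    (maxStars (H'.induce s)).ncard ≤ (maxStars H').ncard ∧
      ∀ y : V', s = ({y}ᶜ : Set V') →
        ∃ f : ↥(maxStars (H'.induce s)) → ↥(maxStars H'),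
          Function.Injective f ∧
            ∀ S : ↥(maxStars (H'.induce s)),
              (f S : Set V') = Subtype.val '' (S : Set s) ∨
              (f S : Set V') = insert y (Subtype.val '' (S : Set s)) := by
  obtain ⟨f, hf, hrecover⟩ := exists_injective_maxStars_induce (H := H') s
  refine ⟨?_, fun y hs => ⟨f, hf, fun S => ?_⟩⟩
  · rw [← Nat.card_coe_set_eq, ← Nat.card_coe_set_eq]
    exact Nat.card_le_card_of_injective f hf
  · subst hs
    rw [← hrecover S, Set.inter_comm, ← Set.sdiff_eq]
    by_cases hy : y ∈ (f S : Set V')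
    · right
      rw [Set.insert_sdiff_singleton, Set.insert_eq_of_mem hy]
    · exact Or.inl (Set.sdiff_singleton_eq_self hy).symm
end

section
/- If a vertex y added to a graph H is not simplicial in H' = H + y, then H' has strictly more maximal induced stars than H: |S(H')| ≥ |S(H)| + 1. -/
open SimpleGraph

/-!
Every maximal induced star `S` of `H = H' - y` extends to a maximal induced star of `H'`:
add `y` if the result is still an induced star, otherwise keep `S`. Deleting `y` recovers `S`,
so this extension is injective. Since `y` has two non-adjacent neighbours `a, b`, the star
`{y, a, b}` lies in a maximal induced star `T₀` of `H'` centred at `y`; then `T₀ \ {y}` is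
independent, whereas deleting `y` from an extended star leaves a star of `H`, which has an edge.
So `T₀` is not an extension, and `H'` has at least one more maximal induced star than `H`.
-/

lemma isStarSet_insert_pair {V : Type*} {G : SimpleGraph V} {y a b : V}
    (hya : G.Adj y a) (hyb : G.Adj y b) (hnab : ¬ G.Adj a b) : IsStarSet G {y, a, b} := by
  refine ⟨y, {a, b}, ⟨Set.insert_nonempty a {b}, ?_, ?_⟩, rfl⟩
  · rintro u (rfl | rfl) <;> assumption
  · rintro u (rfl | rfl) w (rfl | rfl) <;> simp_all [G.adj_comm]

namespace IsStarSet

variable {V W : Type*} {G : SimpleGraph V}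

lemma not_isIndepSet {S : Set V} (hS : IsStarSet G S) : ¬ G.IsIndepSet S := by
  obtain ⟨v, L, ⟨⟨u, hu⟩, hadj, -⟩, rfl⟩ := hS
  exact fun hind => hind (Set.mem_insert v L) (Set.mem_insert_of_mem v hu) (hadj u hu).ne
    (hadj u hu)

lemma image {G' : SimpleGraph W} (f : G ↪g G') {S : Set V} (hS : IsStarSet G S) :
    IsStarSet G' (f '' S) := by
  obtain ⟨v, L, ⟨hne, hadj, hind⟩, rfl⟩ := hS
  refine ⟨f v, f '' L, ⟨hne.image f, ?_, ?_⟩, Set.image_insert_eq⟩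
  · rintro _ ⟨u, hu, rfl⟩
    exact f.map_adj_iff.mpr (hadj u hu)
  · rintro _ ⟨u, hu, rfl⟩ _ ⟨w, hw, rfl⟩
    exact f.map_adj_iff.not.mpr (hind u hu w hw)

lemma preimage_val_s14 {s T : Set V} (hT : IsStarSet G T) (hTs : T ⊆ s) :
    IsStarSet (G.induce s) (Subtype.val ⁻¹' T) := by
  obtain ⟨v, L, ⟨⟨u, hu⟩, hadj, hind⟩, rfl⟩ := hT
  refine ⟨⟨v, hTs (Set.mem_insert v L)⟩, Subtype.val ⁻¹' L, ⟨?_, ?_, ?_⟩, ?_⟩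
  · exact ⟨⟨u, hTs (Set.mem_insert_of_mem v hu)⟩, hu⟩
  · exact fun u hu => hadj u hu
  · exact fun u hu w hw => hind u hu w hw
  · ext u
    simp [Subtype.ext_iff]

lemma diff_singleton {T : Set V} (hT : IsStarSet G T) {y : V}
    (hedge : ¬ G.IsIndepSet (T \ {y})) : IsStarSet G (T \ {y}) := by
  obtain ⟨v, L, ⟨-, hadj, hind⟩, rfl⟩ := hT
  simp only [IsIndepSet, Set.Pairwise, not_forall] at hedge
  obtain ⟨a, ⟨ha, hay⟩, b, ⟨hb, hby⟩, hab, hadj_ab⟩ := hedge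
  rw [not_not] at hadj_ab
  have hvy : v ≠ y := by
    rintro rfl
    have hLa : a ∈ L := ha.resolve_left hay
    exact hind a hLa b (hb.resolve_left hby) hadj_ab
  have hne : (L \ {y}).Nonempty := by
    rcases ha with rfl | ha
    · exact ⟨b, hb.resolve_left (Ne.symm hab), hby⟩
    · exact ⟨a, ha, hay⟩
  refine ⟨v, L \ {y}, ⟨hne, fun u hu => hadj u hu.1, fun u hu w hw => hind u hu.1 w hw.1⟩,
    Set.insert_sdiff_of_notMem L (Set.notMem_singleton_iff.mpr hvy)⟩

/-- A star set containing a vertex `y` and two of its neighbours is centred at `y`. -/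
lemma isIndepSet_diff_singleton {T : Set V} (hT : IsStarSet G T) {y a b : V}
    (hya : G.Adj y a) (hyb : G.Adj y b) (hab : a ≠ b)
    (hy : y ∈ T) (ha : a ∈ T) (hb : b ∈ T) : G.IsIndepSet (T \ {y}) := by
  obtain ⟨v, L, ⟨-, hadj, hind⟩, rfl⟩ := hT
  obtain rfl : v = y := by
    by_contra hvy
    have hyL : y ∈ L := hy.resolve_left (Ne.symm hvy)
    rcases ha with rfl | haL
    · exact hind y hyL b (hb.resolve_left (Ne.symm hab)) hyb
    · exact hind y hyL a haL hya
  rw [Set.insert_sdiff_self_of_notMem fun hvL => G.irrefl (hadj v hvL)]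
  exact fun u hu w hw _ => hind u hu w hw

lemma exists_isMaxStarSet_superset_s14 [Finite V] {S : Set V} (hS : IsStarSet G S) :
    ∃ T, IsMaxStarSet G T ∧ S ⊆ T := by
  obtain ⟨T, hST, hT⟩ := Finite.exists_le_maximal hS
  exact ⟨T, ⟨hT.prop, fun T' hT' hTT' => le_antisymm hTT' (hT.le_of_ge hT' hTT')⟩, hST⟩

end IsStarSet

section Extension

variable {V : Type*} {G : SimpleGraph V} {y : V}

lemma IsMaxStarSet.diff_singleton_eq_image_val {S : Set ({y}ᶜ : Set V)}
    (hS : IsMaxStarSet (G.induce {y}ᶜ) S) {T : Set V} (hT : IsStarSet G T)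
    (hST : Subtype.val '' S ⊆ T) : T \ {y} = Subtype.val '' S := by
  have hS' : IsStarSet G (Subtype.val '' S) := hS.1.image (Embedding.induce _)
  have hSTy : Subtype.val '' S ⊆ T \ {y} := fun u hu =>
    ⟨hST hu, by obtain ⟨u, -, rfl⟩ := hu; exact u.2⟩
  have hTy : IsStarSet G (T \ {y}) :=
    hT.diff_singleton fun hind => hS'.not_isIndepSet (hind.mono hSTy)
  have hsub : T \ {y} ⊆ ({y}ᶜ : Set V) := fun u hu => hu.2
  rw [hS.2 _ (hTy.preimage_val_s14 hsub) (Set.image_subset_iff.mp hSTy),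
    Subtype.image_preimage_coe, Set.inter_eq_right.mpr hsub]

open Classical in
noncomputable def extendStar (G : SimpleGraph V) (y : V) (S : Set ({y}ᶜ : Set V)) : Set V :=
  if IsStarSet G (insert y (Subtype.val '' S)) then insert y (Subtype.val '' S)
  else Subtype.val '' S

lemma extendStar_diff_singleton (S : Set ({y}ᶜ : Set V)) :
    extendStar G y S \ {y} = Subtype.val '' S := by
  have hy : y ∉ Subtype.val '' S := fun ⟨u, _, hu⟩ => u.2 hu
  unfold extendStar
  split_ifs
  · exact Set.insert_sdiff_self_of_notMem hy
  · exact Set.sdiff_singleton_eq_self hy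

lemma extendStar_injective : Function.Injective (extendStar G y) := fun S₁ S₂ h =>
  Set.image_injective.mpr Subtype.val_injective <| by
    rw [← extendStar_diff_singleton, h, extendStar_diff_singleton]

lemma extendStar_mem_maxStars {S : Set ({y}ᶜ : Set V)} (hS : S ∈ maxStars (G.induce {y}ᶜ)) :
    extendStar G y S ∈ maxStars G := by
  have hmax : ∀ T, IsStarSet G T → Subtype.val '' S ⊆ T →
      T = insert y (Subtype.val '' S) ∨ T = Subtype.val '' S := by
    intro T hT hST
    rw [← IsMaxStarSet.diff_singleton_eq_image_val hS hT hST]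
    by_cases hyT : y ∈ T
    · exact Or.inl (Set.insert_sdiff_self_of_mem hyT).symm
    · exact Or.inr (Set.sdiff_singleton_eq_self hyT).symm
  unfold extendStar
  split_ifs with hext
  · refine ⟨hext, fun T hT hST => ?_⟩
    rcases hmax T hT ((Set.subset_insert _ _).trans hST) with rfl | rfl
    · rfl
    · exact absurd (hST (Set.mem_insert y _)) fun ⟨u, _, hu⟩ => u.2 hu
  · refine ⟨hS.1.image (Embedding.induce _), fun T hT hST => ?_⟩
    rcases hmax T hT hST with rfl | rfl
    · exact absurd hT hext
    · rfl

end Extension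

/-- If the added vertex `y` is not simplicial in `H'`, then `H' = (H' - y) + y` has
strictly more maximal induced stars than `H' - y`. -/
theorem stmt14 {V' : Type*} [Fintype V'] (H' : SimpleGraph V') (y : V')
    (hns : ¬ H'.IsClique (H'.neighborSet y)) :
    (maxStars (H'.induce ({y}ᶜ : Set V'))).ncard + 1 ≤ (maxStars H').ncard := by
  obtain ⟨a, hya, b, hyb, hab, hnab⟩ :
      ∃ a, H'.Adj y a ∧ ∃ b, H'.Adj y b ∧ a ≠ b ∧ ¬ H'.Adj a b := by
    simpa [isClique_iff, Set.Pairwise] using hns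
  obtain ⟨T₀, hT₀, hyabT₀⟩ :=
    (isStarSet_insert_pair hya hyb hnab).exists_isMaxStarSet_superset_s14
  have hT₀_new : T₀ ∉ extendStar H' y '' maxStars (H'.induce {y}ᶜ) := by
    rintro ⟨S, hS, rfl⟩
    have hindep := hT₀.1.isIndepSet_diff_singleton hya hyb hab
      (hyabT₀ (by simp)) (hyabT₀ (by simp)) (hyabT₀ (by simp))
    rw [extendStar_diff_singleton] at hindep
    exact (hS.1.image (Embedding.induce _)).not_isIndepSet hindep
  calc (maxStars (H'.induce {y}ᶜ)).ncard + 1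
      = (insert T₀ (extendStar H' y '' maxStars (H'.induce {y}ᶜ))).ncard := by
        rw [Set.ncard_insert_of_notMem hT₀_new,
          Set.ncard_image_of_injective _ extendStar_injective]
    _ ≤ (maxStars H').ncard := by
        refine Set.ncard_le_ncard ?_ (Set.toFinite _)
        rintro T (rfl | ⟨S, hS, rfl⟩)
        exacts [hT₀, extendStar_mem_maxStars hS]
end

section
/- Let G be a connected star graph not isomorphic to a diamond or a triangle, and let E_2(G) be the set of edges of G incident to at least one vertex of degree two. Then |E_2(G)| ≤ min{|V(G)| − 1, (4/7)|E(G)|}. -/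
open SimpleGraph

/-- The diamond: `K₄` minus one edge. -/
def diamond : SimpleGraph (Fin 4) := (⊤ : SimpleGraph (Fin 4)).deleteEdges {s(0, 1)}

/-!
Everything is read off the maximal stars of `H`. Let `S` be a degree-two vertex of the star
graph with neighbours `T` and `R`. Every edge and every induced path on three vertices of `H`
extends to a maximal star; if it touches `S`, that star meets `S`, so it is `S`, `T` or `R`.
Chasing this closure property through the possible positions of the centres of the stars
involved shows that the centre of `S` lies in `T` or `R`, that `T` and `R` meet, and that in
a connected star graph two adjacent degree-two vertices force a triangle, while two degree-two
vertices with the same neighbours force a diamond. Consequently the neighbour of `S`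
containing the centre of `S` has degree at least three and is adjacent to no other degree-two
vertex.

The bounds then follow by counting in an arbitrary graph with this property. If there are `d`
degree-two vertices, then `|E₂| ≤ 2d`; the degree-two vertices, their exclusive neighbours and
one further neighbour are `2d + 1` distinct vertices; and the `d` edges joining the two
neighbours of each degree-two vertex, together with one further edge at each exclusive
neighbour (at least `d / 2` edges), lie outside `E₂`, so that
`|E| ≥ |E₂| + 3d / 2 ≥ 7 |E₂| / 4`.
-/

section Stars
variable {V : Type*} {H : SimpleGraph V} {S : Set V} {a b c p w x y : V}

def IsStarCenter (H : SimpleGraph V) (c : V) (S : Set V) : Prop :=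
  c ∈ S ∧ IsStar H c (S \ {c})

namespace IsStarCenter

lemma adj (h : IsStarCenter H c S) (hx : x ∈ S) (hxc : x ≠ c) : H.Adj c x :=
  h.2.2.1 x ⟨hx, hxc⟩

lemma not_adj (h : IsStarCenter H c S) (hx : x ∈ S) (hy : y ∈ S) (hxc : x ≠ c)
    (hyc : y ≠ c) : ¬ H.Adj x y :=
  h.2.2.2 x ⟨hx, hxc⟩ y ⟨hy, hyc⟩

lemma eq_or_eq_of_adj (h : IsStarCenter H c S) (hx : x ∈ S) (hy : y ∈ S)
    (hxy : H.Adj x y) : x = c ∨ y = c := by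
  by_contra! hne
  exact h.not_adj hx hy hne.1 hne.2 hxy

lemma mem_of_adj {M : Set V} (h : IsStarCenter H c M) (hx : x ∈ M) (hy : y ∈ M)
    (hxy : H.Adj x y) (hxS : x ∈ S) (hyS : y ∈ S) : c ∈ S := by
  rcases h.eq_or_eq_of_adj hx hy hxy with rfl | rfl <;> assumption

lemma exists_adj (h : IsStarCenter H c S) (hx : x ∈ S) : ∃ y ∈ S, H.Adj x y := by
  by_cases hxc : x = c
  · obtain ⟨y, hyS, hyc⟩ := h.2.1
    exact ⟨y, hyS, hxc ▸ h.adj hyS hyc⟩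
  · exact ⟨c, h.1, (h.adj hx hxc).symm⟩

end IsStarCenter

lemma IsStarSet.exists_isStarCenter (h : IsStarSet H S) : ∃ c, IsStarCenter H c S := by
  obtain ⟨c, L, hL, rfl⟩ := h
  have hcL : c ∉ L := fun hc => H.irrefl (hL.2.1 c hc)
  exact ⟨c, Set.mem_insert c L, by rwa [Set.insert_sdiff_self_of_notMem hcL]⟩

lemma exists_isStarCenter (hS : S ∈ maxStars H) : ∃ c, IsStarCenter H c S :=
  hS.1.exists_isStarCenter

lemma exists_mem_maxStars_superset [Finite V] (hS : IsStarSet H S) :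
    ∃ M ∈ maxStars H, S ⊆ M := by
  obtain ⟨M, hM, hmax⟩ := Set.Finite.exists_maximalFor id
    {T | IsStarSet H T ∧ S ⊆ T} (Set.toFinite _) ⟨S, hS, subset_rfl⟩
  refine ⟨M, ⟨hM.1, fun T hT hMT => ?_⟩, hM.2⟩
  exact le_antisymm hMT (hmax ⟨hT, hM.2.trans hMT⟩ hMT)

lemma exists_mem_maxStars_of_adj [Finite V] (hab : H.Adj a b) :
    ∃ M ∈ maxStars H, a ∈ M ∧ b ∈ M := by
  have hstar : IsStarSet H {a, b} :=
    ⟨a, {b}, ⟨Set.singleton_nonempty b, by simpa using hab, by simp⟩, rfl⟩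
  obtain ⟨M, hM, hsub⟩ := exists_mem_maxStars_superset hstar
  exact ⟨M, hM, hsub (by simp), hsub (by simp)⟩

lemma exists_mem_maxStars_of_cherry [Finite V] (hpa : H.Adj p a) (hpb : H.Adj p b)
    (hab : ¬ H.Adj a b) : ∃ M ∈ maxStars H, p ∈ M ∧ a ∈ M ∧ b ∈ M := by
  have hstar : IsStarSet H {p, a, b} := by
    refine ⟨p, {a, b}, ⟨Set.insert_nonempty a {b}, ?_, ?_⟩, rfl⟩
    · rintro u (rfl | rfl) <;> assumption
    · rintro u (rfl | rfl) w (rfl | rfl) <;>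
        first | exact H.irrefl | exact hab | exact hab ∘ .symm
  obtain ⟨M, hM, hsub⟩ := exists_mem_maxStars_superset hstar
  exact ⟨M, hM, hsub (by simp), hsub (by simp), hsub (by simp)⟩

lemma exists_mem_maxStars_of_adj_of_adj [Finite V] (hax : H.Adj a x) (hxb : H.Adj x b) :
    ∃ M ∈ maxStars H, a ∈ M ∧ b ∈ M := by
  by_cases hadj : H.Adj a b
  · exact exists_mem_maxStars_of_adj hadj
  · obtain ⟨M, hM, -, haM, hbM⟩ := exists_mem_maxStars_of_cherry hax.symm hxb hadj
    exact ⟨M, hM, haM, hbM⟩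

lemma exists_adj_of_mem_maxStars (hS : S ∈ maxStars H) (hx : x ∈ S) :
    ∃ y ∈ S, H.Adj x y :=
  (exists_isStarCenter hS).elim fun _ hc => hc.exists_adj hx

lemma disjoint_of_forall_adj_mem {Q X Y : Set V} (hQ : Q ∈ maxStars H) (hQX : Disjoint Q X)
    (h : ∀ z ∈ Y, z ∉ X → ∀ q, H.Adj z q → q ∈ X) : Disjoint Q Y := by
  rw [Set.disjoint_left]
  intro z hzQ hzY
  obtain ⟨q, hqQ, hzq⟩ := exists_adj_of_mem_maxStars hQ hzQ
  exact hQX.notMem_of_mem_left hqQ (h z hzY (hQX.notMem_of_mem_left hzQ) q hzq)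

lemma IsStarCenter.exists_adj_of_adj_notMem (hS : S ∈ maxStars H) (h : IsStarCenter H c S)
    (hcw : H.Adj c w) (hw : w ∉ S) : ∃ x ∈ S, x ≠ c ∧ H.Adj x w := by
  by_contra! hcon
  have hstar : IsStarSet H (insert w S) := by
    refine ⟨c, insert w (S \ {c}), ⟨Set.insert_nonempty _ _, ?_, ?_⟩, ?_⟩
    · rintro u (rfl | hu)
      exacts [hcw, h.2.2.1 u hu]
    · rintro u (rfl | hu) z (rfl | hz)
      · exact H.irrefl
      · exact fun hwz => hcon z hz.1 hz.2 hwz.symm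
      · exact hcon u hu.1 hu.2
      · exact h.2.2.2 u hu z hz
    · ext z
      by_cases hzc : z = c <;> simp [hzc, h.1]
  exact hw ((hS.2 _ hstar (Set.subset_insert w S)).symm ▸ Set.mem_insert w S)

end Stars

/-- In the star graph, `S` has degree two with neighbours `T` and `R`. -/
structure DegTwoStar {V : Type*} (H : SimpleGraph V) (S T R : Set V) : Prop where
  mem : S ∈ maxStars H
  mem_left : T ∈ maxStars H
  mem_right : R ∈ maxStars H
  meets_left : (T ∩ S).Nonempty
  meets_right : (R ∩ S).Nonempty
  eq_of_meets : ∀ M ∈ maxStars H, (M ∩ S).Nonempty → M = S ∨ M = T ∨ M = R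

namespace DegTwoStar
variable {V : Type*} {H : SimpleGraph V} {S T R A : Set V} {a b c q v x z : V}

lemma symm (h : DegTwoStar H S T R) : DegTwoStar H S R T :=
  ⟨h.mem, h.mem_right, h.mem_left, h.meets_right, h.meets_left,
    fun M hM hMS => (h.eq_of_meets M hM hMS).imp_right Or.symm⟩

lemma eq_of_mem (h : DegTwoStar H S T R) {M : Set V} (hM : M ∈ maxStars H) (hxM : x ∈ M)
    (hxS : x ∈ S) : M = S ∨ M = T ∨ M = R :=
  h.eq_of_meets M hM ⟨x, hxM, hxS⟩

variable [Finite V]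

lemma mem_of_adj (h : DegTwoStar H S T R) (haS : a ∈ S) (hab : H.Adj a b) :
    b ∈ S ∨ (a ∈ T ∧ b ∈ T) ∨ (a ∈ R ∧ b ∈ R) := by
  obtain ⟨M, hM, haM, hbM⟩ := exists_mem_maxStars_of_adj hab
  rcases h.eq_of_mem hM haM haS with rfl | rfl | rfl
  exacts [.inl hbM, .inr (.inl ⟨haM, hbM⟩), .inr (.inr ⟨haM, hbM⟩)]

lemma mem_of_adj_of_adj (h : DegTwoStar H S T R) (haS : a ∈ S) (hax : H.Adj a x)
    (hxb : H.Adj x b) : b ∈ S ∨ (a ∈ T ∧ b ∈ T) ∨ (a ∈ R ∧ b ∈ R) := by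
  obtain ⟨M, hM, haM, hbM⟩ := exists_mem_maxStars_of_adj_of_adj hax hxb
  rcases h.eq_of_mem hM haM haS with rfl | rfl | rfl
  exacts [.inl hbM, .inr (.inl ⟨haM, hbM⟩), .inr (.inr ⟨haM, hbM⟩)]

lemma center_mem (h : DegTwoStar H S T R) (hv : IsStarCenter H v S) : v ∈ T ∨ v ∈ R := by
  by_contra! hvTR
  obtain ⟨x, hxT, hxS⟩ := h.meets_left
  have hxv : x ≠ v := fun hxv => hvTR.1 (hxv ▸ hxT)
  obtain ⟨y, hyT, hxy⟩ := exists_adj_of_mem_maxStars h.mem_left hxT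
  have hyS : y ∉ S := fun hyS =>
    hv.not_adj hxS hyS hxv (fun hyv => hvTR.1 (hyv ▸ hyT)) hxy
  rcases h.mem_of_adj_of_adj hv.1 (hv.adj hxS hxv) hxy with hy | hvT | hvR
  exacts [hyS hy, hvTR.1 hvT.1, hvTR.2 hvR.1]

lemma inter_nonempty_of_center_mem (h : DegTwoStar H S T R) (hv : IsStarCenter H v S)
    (hvT : v ∈ T) : (T ∩ R).Nonempty := by
  by_contra hTR
  have hvR : v ∉ R := fun hvR => hTR ⟨v, hvT, hvR⟩
  obtain ⟨x, hxR, hxS⟩ := h.meets_right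
  have hxv : x ≠ v := fun hxv => hvR (hxv ▸ hxR)
  obtain ⟨y, hyR, hxy⟩ := exists_adj_of_mem_maxStars h.mem_right hxR
  have hyS : y ∉ S := fun hyS =>
    hv.not_adj hxS hyS hxv (fun hyv => hvR (hyv ▸ hyR)) hxy
  rcases h.mem_of_adj_of_adj hv.1 (hv.adj hxS hxv) hxy with hy | hT | hR
  exacts [hyS hy, hTR ⟨y, hT.2, hyR⟩, hvR hR.1]

lemma inter_nonempty (h : DegTwoStar H S T R) : (T ∩ R).Nonempty := by
  obtain ⟨v, hv⟩ := exists_isStarCenter h.mem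
  rcases h.center_mem hv with hvT | hvR
  · exact h.inter_nonempty_of_center_mem hv hvT
  · rw [Set.inter_comm]
    exact h.symm.inter_nonempty_of_center_mem hv hvR

lemma center_right_mem (h : DegTwoStar H S T R) (hc : IsStarCenter H c R) :
    c ∈ S ∨ c ∈ T := by
  by_contra! hcST
  obtain ⟨v, hv⟩ := exists_isStarCenter h.mem
  have hvc : v ≠ c := fun hvc => hcST.1 (hvc ▸ hv.1)
  have hleaf : ∀ y ∈ R ∩ S, y ≠ v → False := by
    rintro y ⟨hyR, hyS⟩ hyv
    have hyc : y ≠ c := fun hyc => hcST.1 (hyc ▸ hyS)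
    rcases h.mem_of_adj_of_adj hv.1 (hv.adj hyS hyv) (hc.adj hyR hyc).symm
      with hcS | hT | hR
    exacts [hcST.1 hcS, hcST.2 hT.2, hc.not_adj hR.1 hyR hvc hyc (hv.adj hyS hyv)]
  obtain ⟨y, hy⟩ := h.meets_right
  by_cases hyv : y = v
  · subst hyv
    obtain ⟨x, hxS, hxv, hxc⟩ :=
      hv.exists_adj_of_adj_notMem h.mem (hc.adj hy.1 hvc).symm hcST.1
    rcases h.mem_of_adj hxS hxc with hcS | hT | hR
    exacts [hcST.1 hcS, hcST.2 hT.2, hleaf x ⟨hR.1, hxS⟩ hxv]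
  · exact hleaf y hy hyv

/-- `S` and `T` are adjacent degree-two vertices of the star graph. -/
lemma mem_union_of_adj_of_swap (hS : DegTwoStar H S T R) (hT : DegTwoStar H T S R)
    (hzR : z ∈ R) (hz : z ∉ S ∪ T) (hzq : H.Adj z q) : q ∈ S ∪ T := by
  by_contra hq
  obtain ⟨c, hc⟩ := exists_isStarCenter hS.mem_right
  have hcST : c ∈ S ∪ T := by
    rcases hS.center_right_mem hc with hcS | hcT
    exacts [.inl hcS, .inr hcT]
  have hzc : z ≠ c := fun hzc => hz (hzc ▸ hcST)
  have hqR : q ∉ R := fun hqR => hc.not_adj hzR hqR hzc (fun hqc => hq (hqc ▸ hcST)) hzq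
  obtain ⟨M, hM, hcM, hqM⟩ := exists_mem_maxStars_of_adj_of_adj (hc.adj hzR hzc) hzq
  have hMST : M = S ∨ M = T ∨ M = R := by
    rcases hcST with hcS | hcT
    · exact hS.eq_of_mem hM hcM hcS
    · rcases hT.eq_of_mem hM hcM hcT with h | h | h <;> tauto
  rcases hMST with rfl | rfl | rfl
  exacts [hq (.inl hqM), hq (.inr hqM), hqR hqM]

lemma disjoint_of_swap (hS : DegTwoStar H S T R) (hT : DegTwoStar H T S R) {Q : Set V}
    (hQ : Q ∈ maxStars H) (hQST : Disjoint Q (S ∪ T)) : Disjoint Q R :=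
  disjoint_of_forall_adj_mem hQ hQST fun _ hzR hz _ hzq =>
    hS.mem_union_of_adj_of_swap hT hzR hz hzq

lemma disjoint_of_center_mem (h : DegTwoStar H S T R) (hv : IsStarCenter H v S) (hvT : v ∈ T)
    (hA : A ∈ maxStars H) (hAS : Disjoint A S) (hAR : Disjoint A R) : Disjoint A T := by
  rw [Set.disjoint_left]
  intro t htA htT
  have hT : ∀ {M}, M ∈ maxStars H → ∀ {x a},
      x ∈ M → x ∈ S → a ∈ M → a ∈ A → M = T := by
    intro M hM x a hxM hxS haM haA
    rcases h.eq_of_mem hM hxM hxS with rfl | rfl | rfl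
    exacts [absurd haM (hAS.notMem_of_mem_left haA), rfl,
      absurd haM (hAR.notMem_of_mem_left haA)]
  obtain ⟨s, hsA, hts⟩ := exists_adj_of_mem_maxStars hA htA
  obtain ⟨c, hc⟩ := exists_isStarCenter h.mem_left
  by_cases hcS : c ∈ S
  · have htc : t ≠ c := fun htc => hAS.notMem_of_mem_left htA (htc ▸ hcS)
    have hsc : s ≠ c := fun hsc => hAS.notMem_of_mem_left hsA (hsc ▸ hcS)
    obtain ⟨M, hM, hcM, hsM⟩ := exists_mem_maxStars_of_adj_of_adj (hc.adj htT htc) hts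
    exact hc.not_adj htT ((hT hM hcM hcS hsM hsA) ▸ hsM) htc hsc hts
  · have hvc : v ≠ c := fun hvc => hcS (hvc ▸ hv.1)
    obtain ⟨x, hxS, hxv, hxc⟩ :=
      hv.exists_adj_of_adj_notMem h.mem (hc.adj hvT hvc).symm hcS
    have hxT : x ∈ T := by
      by_cases hcA : c ∈ A
      · obtain ⟨M, hM, hxM, hcM⟩ := exists_mem_maxStars_of_adj hxc
        exact (hT hM hxM hxS hcM hcA) ▸ hxM
      · have htc : t ≠ c := fun htc => hcA (htc ▸ htA)
        obtain ⟨M, hM, hxM, htM⟩ := exists_mem_maxStars_of_adj_of_adj hxc (hc.adj htT htc)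
        exact (hT hM hxM hxS htM htA) ▸ hxM
    exact hc.not_adj hvT hxT hvc (fun hxc' => hcS (hxc' ▸ hxS)) (hv.adj hxS hxv)

end DegTwoStar

/-- In the star graph, `S` and `A` are disjoint degree-two vertices with the same two
neighbours `T` and `R`. -/
structure TwinStars {V : Type*} (H : SimpleGraph V) (S A T R : Set V) : Prop where
  left : DegTwoStar H S T R
  right : DegTwoStar H A T R
  disjoint : Disjoint S A

namespace TwinStars
variable {V : Type*} {H : SimpleGraph V} {S A T R : Set V} {b b' c c' q v w z : V}

lemma swap (h : TwinStars H S A T R) : TwinStars H A S T R :=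
  ⟨h.right, h.left, h.disjoint.symm⟩

lemma symm (h : TwinStars H S A T R) : TwinStars H S A R T :=
  ⟨h.left.symm, h.right.symm, h.disjoint⟩

lemma eq_of_mem (h : TwinStars H S A T R) {M : Set V} (hM : M ∈ maxStars H) (hbM : b ∈ M)
    (hb : b ∈ S ∪ A) : M = S ∨ M = A ∨ M = T ∨ M = R := by
  rcases hb with hb | hb
  · rcases h.left.eq_of_mem hM hbM hb with h' | h' | h' <;> tauto
  · rcases h.right.eq_of_mem hM hbM hb with h' | h' | h' <;> tauto

variable [Finite V]

lemma center_left_mem_right (h : TwinStars H S A T R) (hc : IsStarCenter H c T) : c ∈ R := by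
  rcases h.left.symm.center_right_mem hc with hcS | hcR
  · exact (h.right.symm.center_right_mem hc).resolve_left (h.disjoint.notMem_of_mem_left hcS)
  · exact hcR

lemma isStarCenter_right_of_center_notMem (h : TwinStars H S A T R) (hv : IsStarCenter H v S)
    (hvT : v ∈ T) (hc : IsStarCenter H c T) (hcS : c ∉ S) :
    IsStarCenter H c R ∧ ∃ x ∈ S, x ≠ v ∧ x ∉ T ∧ x ∈ R ∧ H.Adj x c := by
  have hvc : v ≠ c := fun hvc => hcS (hvc ▸ hv.1)
  obtain ⟨x, hxS, hxv, hxc⟩ :=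
    hv.exists_adj_of_adj_notMem h.left.mem (hc.adj hvT hvc).symm hcS
  have hxT : x ∉ T := fun hxT =>
    hc.not_adj hvT hxT hvc (fun hxc' => hcS (hxc' ▸ hxS)) (hv.adj hxS hxv)
  have hxR : x ∈ R ∧ c ∈ R := by
    rcases h.left.mem_of_adj hxS hxc with hcS' | hT | hR
    exacts [absurd hcS' hcS, absurd hT.1 hxT, hR]
  obtain ⟨c', hc'⟩ := exists_isStarCenter h.left.mem_right
  refine ⟨?_, x, hxS, hxv, hxT, hxR.1, hxc⟩
  rcases hc'.eq_or_eq_of_adj hxR.1 hxR.2 hxc with rfl | rfl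
  exacts [absurd (h.symm.center_left_mem_right hc') hxT, hc']

lemma center_left_mem_union (h : TwinStars H S A T R) (hv : IsStarCenter H v S) (hvT : v ∈ T)
    (hc : IsStarCenter H c T) : c ∈ S ∪ A := by
  by_contra hcSA
  rw [Set.mem_union, not_or] at hcSA
  obtain ⟨hcS, hcA⟩ := hcSA
  obtain ⟨hcR, x, hxS, hxv, hxT, hxR, hxc⟩ :=
    h.isStarCenter_right_of_center_notMem hv hvT hc hcS
  have hvc : v ≠ c := fun hvc => hcS (hvc ▸ hv.1)
  have hxc' : x ≠ c := fun hxc' => hcS (hxc' ▸ hxS)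
  obtain ⟨w, hw⟩ := exists_isStarCenter h.right.mem
  have hwc : w ≠ c := fun hwc => hcA (hwc ▸ hw.1)
  have hwTR := h.right.center_mem hw
  obtain ⟨a, haA, haw, hac⟩ := hw.exists_adj_of_adj_notMem h.right.mem
    (hwTR.elim (hc.adj · hwc) (hcR.adj · hwc)).symm hcA
  have hac' : a ≠ c := fun hac' => hcA (hac' ▸ haA)
  have haS : a ∉ S := h.disjoint.notMem_of_mem_right haA
  rcases hwTR with hwT | hwR
  · have haT : a ∉ T := fun haT => hc.not_adj hwT haT hwc hac' (hw.adj haA haw)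
    have haR : a ∈ R := by
      rcases h.right.mem_of_adj haA hac with hcA' | hT | hR
      exacts [absurd hcA' hcA, absurd hT.1 haT, hR.1]
    have hvR : v ∉ R := fun hvR => hcR.not_adj hvR hxR hvc hxc' (hv.adj hxS hxv)
    rcases h.left.mem_of_adj_of_adj hv.1 (hc.adj hvT hvc).symm (hcR.adj haR hac') with
      haS' | hT | hR
    exacts [haS haS', haT hT.2, hvR hR.1]
  · have haR : a ∉ R := fun haR => hcR.not_adj hwR haR hwc hac' (hw.adj haA haw)
    have haT : a ∈ T := by
      rcases h.right.mem_of_adj haA hac with hcA' | hT | hR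
      exacts [absurd hcA' hcA, hT.1, absurd hR.1 haR]
    rcases h.left.mem_of_adj_of_adj hxS hxc (hc.adj haT hac') with haS' | hT | hR
    exacts [haS haS', hxT hT.1, haR hR.2]

lemma not_isStarCenter_of_mem (h : TwinStars H S A T R) (hv : IsStarCenter H v S)
    (hw : IsStarCenter H w A) (hwT : w ∈ T) : ¬ IsStarCenter H v T := by
  intro hvT
  have hwv : w ≠ v := fun hwv => h.disjoint.notMem_of_mem_left hv.1 (hwv ▸ hw.1)
  have hvw : H.Adj v w := hvT.adj hwT hwv
  obtain ⟨a, haA, haw⟩ := hw.2.1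
  have hwa : H.Adj w a := hw.adj haA haw
  have hav : a ≠ v := fun hav => h.disjoint.notMem_of_mem_left hv.1 (hav ▸ haA)
  have haT : a ∉ T := fun haT => hvT.not_adj hwT haT hwv hav hwa
  have hvaR : v ∈ R ∧ a ∈ R := by
    rcases h.left.mem_of_adj_of_adj hv.1 hvw hwa with haS | hT | hR
    exacts [absurd haS (h.disjoint.notMem_of_mem_right haA), absurd hT.2 haT, hR]
  obtain ⟨x, hxS, hxv, hxw⟩ := hv.exists_adj_of_adj_notMem h.left.mem hvw
    (h.disjoint.notMem_of_mem_right hw.1)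
  have hxwR : x ∈ R ∧ w ∈ R := by
    rcases h.left.mem_of_adj hxS hxw with hwS | hT | hR
    exacts [absurd hwS (h.disjoint.notMem_of_mem_right hw.1),
      absurd hxw (hvT.not_adj hT.1 hwT hxv hwv), hR]
  obtain ⟨c, hc⟩ := exists_isStarCenter h.left.mem_right
  -- the disjoint edges `vx` and `wa` of the star `R` would both contain its center
  exact h.disjoint.notMem_of_mem_left (hc.mem_of_adj hvaR.1 hxwR.1 (hv.adj hxS hxv) hv.1 hxS)
    (hc.mem_of_adj hxwR.2 hvaR.2 hwa hw.1 haA)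

lemma notMem_left_of_common_center (h : TwinStars H S A T R) (hcT : IsStarCenter H c T)
    (hcR : IsStarCenter H c R) (hc : c ∈ S ∪ A) (hb : b ∈ S ∪ A) (hbR : b ∈ R)
    (hbT : b ∉ T) (hz : z ∈ T ∪ R) (hzSA : z ∉ S ∪ A) (hzq : H.Adj z q)
    (hq : q ∉ S ∪ A) : q ∉ T := by
  intro hqT
  have hzc : z ≠ c := fun hzc => hzSA (hzc ▸ hc)
  have hqc : q ≠ c := fun hqc => hq (hqc ▸ hc)
  have hzR : z ∈ R := hz.resolve_left fun hzT => hcT.not_adj hzT hqT hzc hqc hzq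
  have hbc : b ≠ c := fun hbc => hbT (hbc ▸ hcT.1)
  obtain ⟨M, hM, hbM, hqM⟩ :=
    exists_mem_maxStars_of_adj_of_adj (hcR.adj hbR hbc).symm (hcT.adj hqT hqc)
  rcases h.eq_of_mem hM hbM hb with rfl | rfl | rfl | rfl
  exacts [hq (.inl hqM), hq (.inr hqM), hbT hbM, hcR.not_adj hzR hqM hzc hqc hzq]

lemma false_of_common_center (h : TwinStars H S A T R) (hcT : IsStarCenter H c T)
    (hcR : IsStarCenter H c R) (hc : c ∈ S ∪ A) (hb : b ∈ S ∪ A) (hbT : b ∈ T)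
    (hbR : b ∉ R) (hb' : b' ∈ S ∪ A) (hb'R : b' ∈ R) (hb'T : b' ∉ T)
    (hz : z ∈ T ∪ R) (hzSA : z ∉ S ∪ A) (hzq : H.Adj z q) (hq : q ∉ S ∪ A) : False := by
  have hqT := h.notMem_left_of_common_center hcT hcR hc hb' hb'R hb'T hz hzSA hzq hq
  have hqR := h.symm.notMem_left_of_common_center hcR hcT hc hb hbT hbR hz.symm hzSA hzq hq
  have hzc : z ≠ c := fun hzc => hzSA (hzc ▸ hc)
  obtain ⟨M, hM, hcM, hqM⟩ :=
    exists_mem_maxStars_of_adj_of_adj (hz.elim (hcT.adj · hzc) (hcR.adj · hzc)) hzq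
  rcases h.eq_of_mem hM hcM hc with rfl | rfl | rfl | rfl
  exacts [hq (.inl hqM), hq (.inr hqM), hqT hqM, hqR hqM]

lemma isStarCenter_right_of_center_mem (h : TwinStars H S A T R) (hv : IsStarCenter H v S)
    (hvT : v ∈ T) (hw : IsStarCenter H w A) (hwT : w ∈ T) (hc : IsStarCenter H c T)
    (hcS : c ∈ S) (hvc : v ≠ c) :
    IsStarCenter H c R ∧ w ∉ R ∧ ∃ a ∈ A, a ∈ R ∧ a ∉ T := by
  have hcA : c ∉ A := h.disjoint.notMem_of_mem_left hcS
  have hwc : w ≠ c := fun hwc => hcA (hwc ▸ hw.1)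
  obtain ⟨a, haA, haw, hac⟩ :=
    hw.exists_adj_of_adj_notMem h.right.mem (hc.adj hwT hwc).symm hcA
  have hac' : a ≠ c := fun hac' => hcA (hac' ▸ haA)
  have haT : a ∉ T := fun haT => hc.not_adj hwT haT hwc hac' (hw.adj haA haw)
  have hacR : a ∈ R ∧ c ∈ R := by
    rcases h.right.mem_of_adj haA hac with hcA' | hT | hR
    exacts [absurd hcA' hcA, absurd hT.1 haT, hR]
  have hvR : v ∈ R := by
    rcases h.left.mem_of_adj_of_adj hv.1 (hc.adj hvT hvc).symm hac.symm with haS | hT | hR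
    exacts [absurd haS (h.disjoint.notMem_of_mem_right haA), absurd hT.2 haT, hR.1]
  obtain ⟨c', hc'⟩ := exists_isStarCenter h.left.mem_right
  have hcR : IsStarCenter H c R := by
    rcases hc'.eq_or_eq_of_adj hacR.1 hacR.2 hac with rfl | rfl
    · exact absurd (hc.adj hvT hvc).symm
        (hc'.not_adj hvR hacR.2 (fun hva => h.disjoint.notMem_of_mem_left hv.1 (hva ▸ haA))
          hac'.symm)
    · exact hc'
  exact ⟨hcR, fun hwR => hcR.not_adj hwR hacR.1 hwc hac' (hw.adj haA haw), a, haA, hacR.1, haT⟩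

lemma false_of_centers_mem_left (h : TwinStars H S A T R) (hv : IsStarCenter H v S)
    (hw : IsStarCenter H w A) (hvT : v ∈ T) (hwT : w ∈ T)
    (hz : z ∈ T ∪ R) (hzSA : z ∉ S ∪ A) (hzq : H.Adj z q) (hq : q ∉ S ∪ A) : False := by
  obtain ⟨c, hc⟩ := exists_isStarCenter h.left.mem_left
  have hvc : v ≠ c := fun hvc => h.not_isStarCenter_of_mem hv hw hwT (hvc ▸ hc)
  have hwc : w ≠ c := fun hwc => h.swap.not_isStarCenter_of_mem hw hv hvT (hwc ▸ hc)
  rcases h.center_left_mem_union hv hvT hc with hcS | hcA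
  · obtain ⟨hcR, hwR, a, haA, haR, haT⟩ :=
      h.isStarCenter_right_of_center_mem hv hvT hw hwT hc hcS hvc
    exact h.false_of_common_center hc hcR (.inl hcS) (.inr hw.1) hwT hwR (.inr haA) haR haT
      hz hzSA hzq hq
  · obtain ⟨hcR, hvR, a, haS, haR, haT⟩ :=
      h.swap.isStarCenter_right_of_center_mem hw hwT hv hvT hc hcA hwc
    exact h.false_of_common_center hc hcR (.inr hcA) (.inl hv.1) hvT hvR (.inl haS) haR haT
      hz hzSA hzq hq

lemma false_of_center_left_mem_of_center_right_mem (h : TwinStars H S A T R)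
    (hcT : IsStarCenter H c T) (hcS : c ∈ S) (hcR : IsStarCenter H c' R) (hc'A : c' ∈ A)
    (hc'T : c' ∈ T) (hcc : c' ≠ c)
    (hz : z ∈ T ∪ R) (hzSA : z ∉ S ∪ A) (hzq : H.Adj z q) (hq : q ∉ S ∪ A) : False := by
  have hzc : z ≠ c := fun hzc => hzSA (.inl (hzc ▸ hcS))
  have hzc' : z ≠ c' := fun hzc' => hzSA (.inr (hzc' ▸ hc'A))
  have hqc : q ≠ c := fun hqc => hq (.inl (hqc ▸ hcS))
  have hqc' : q ≠ c' := fun hqc' => hq (.inr (hqc' ▸ hc'A))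
  by_cases hzT : z ∈ T
  · have hqT : q ∉ T := fun hqT => hcT.not_adj hzT hqT hzc hqc hzq
    by_cases hqR : q ∈ R
    · obtain ⟨M, hM, hqM, hc'M, hzM⟩ := exists_mem_maxStars_of_cherry (hcR.adj hqR hqc').symm
        hzq.symm (hcT.not_adj hc'T hzT hcc hzc)
      rcases h.right.eq_of_mem hM hc'M hc'A with rfl | rfl | rfl
      exacts [hzSA (.inr hzM), hqT hqM, hcR.not_adj hzM hqR hzc' hqc' hzq]
    · obtain ⟨M, hM, hcM, hqM⟩ := exists_mem_maxStars_of_adj_of_adj (hcT.adj hzT hzc) hzq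
      rcases h.left.eq_of_mem hM hcM hcS with rfl | rfl | rfl
      exacts [hq (.inl hqM), hqT hqM, hqR hqM]
  · have hzR : z ∈ R := hz.resolve_left hzT
    have hqR : q ∉ R := fun hqR => hcR.not_adj hzR hqR hzc' hqc' hzq
    by_cases hqT : q ∈ T
    · obtain ⟨M, hM, hzM, hc'M, hqM⟩ := exists_mem_maxStars_of_cherry (hcR.adj hzR hzc').symm
        hzq (hcT.not_adj hc'T hqT hcc hqc)
      rcases h.right.eq_of_mem hM hc'M hc'A with rfl | rfl | rfl
      exacts [hzSA (.inr hzM), hzT hzM, hqR hqM]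
    · obtain ⟨M, hM, hc'M, hqM⟩ := exists_mem_maxStars_of_adj_of_adj (hcR.adj hzR hzc') hzq
      rcases h.right.eq_of_mem hM hc'M hc'A with rfl | rfl | rfl
      exacts [hq (.inr hqM), hqT hqM, hqR hqM]

lemma false_of_centers_crossed (h : TwinStars H S A T R) (hv : IsStarCenter H v S)
    (hw : IsStarCenter H w A) (hvT : v ∈ T) (hvR : v ∉ R) (hwR : w ∈ R) (hwT : w ∉ T)
    (hz : z ∈ T ∪ R) (hzSA : z ∉ S ∪ A) (hzq : H.Adj z q) (hq : q ∉ S ∪ A) : False := by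
  obtain ⟨c, hc⟩ := exists_isStarCenter h.left.mem_left
  have hcommon : IsStarCenter H c R → c ∈ S ∪ A → False := fun hcR hcSA =>
    h.false_of_common_center hc hcR hcSA (.inl hv.1) hvT hvR (.inr hw.1) hwR hwT hz hzSA hzq hq
  rcases h.center_left_mem_union hv hvT hc with hcS | hcA
  · obtain ⟨c', hc'⟩ := exists_isStarCenter h.left.mem_right
    by_cases hcc : c' = c
    · exact hcommon (hcc ▸ hc') (.inl hcS)
    have hvc : v ≠ c := fun hvc => hvR (hvc ▸ h.center_left_mem_right hc)
    have hc'T : c' ∈ T := h.symm.center_left_mem_right hc'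
    rcases h.swap.symm.center_left_mem_union hw hwR hc' with hc'A | hc'S
    · exact h.false_of_center_left_mem_of_center_right_mem hc hcS hc' hc'A hc'T hcc
        hz hzSA hzq hq
    · exact hv.not_adj hcS hc'S hvc.symm (fun hc'v => hvR (hc'v ▸ hc'.1)) (hc.adj hc'T hcc)
  · exact hcommon (h.isStarCenter_right_of_center_notMem hv hvT hc
      (h.disjoint.notMem_of_mem_right hcA)).1 (.inr hcA)

theorem mem_union_of_adj (h : TwinStars H S A T R) (hz : z ∈ T ∪ R) (hzSA : z ∉ S ∪ A)
    (hzq : H.Adj z q) : q ∈ S ∪ A := by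
  by_contra hq
  obtain ⟨v, hv⟩ := exists_isStarCenter h.left.mem
  obtain ⟨w, hw⟩ := exists_isStarCenter h.right.mem
  have hvTR := h.left.center_mem hv
  have hwTR := h.right.center_mem hw
  have hzAS : z ∉ A ∪ S := by rwa [Set.union_comm]
  have hqAS : q ∉ A ∪ S := by rwa [Set.union_comm]
  by_cases hvT : v ∈ T <;> by_cases hwT : w ∈ T
  · exact h.false_of_centers_mem_left hv hw hvT hwT hz hzSA hzq hq
  · by_cases hvR : v ∈ R
    · exact h.symm.false_of_centers_mem_left hv hw hvR (hwTR.resolve_left hwT) hz.symm hzSA hzq hq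
    · exact h.false_of_centers_crossed hv hw hvT hvR (hwTR.resolve_left hwT) hwT hz hzSA hzq hq
  · by_cases hwR : w ∈ R
    · exact h.symm.false_of_centers_mem_left hv hw (hvTR.resolve_left hvT) hwR hz.symm hzSA hzq hq
    · exact h.swap.false_of_centers_crossed hw hv hwT hwR (hvTR.resolve_left hvT) hvT
        hz hzAS hzq hqAS
  · exact h.symm.false_of_centers_mem_left hv hw (hvTR.resolve_left hvT)
      (hwTR.resolve_left hwT) hz.symm hzSA hzq hq

lemma disjoint_union (h : TwinStars H S A T R) {Q : Set V} (hQ : Q ∈ maxStars H)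
    (hQSA : Disjoint Q (S ∪ A)) : Disjoint Q (T ∪ R) :=
  disjoint_of_forall_adj_mem hQ hQSA fun _ hz hzSA _ hzq => h.mem_union_of_adj hz hzSA hzq

end TwinStars

section GraphFacts
variable {W : Type*} {G : SimpleGraph W} {a b c d x : W}

lemma SimpleGraph.nonempty_iso_of_bijective {α : Type*} {G' : SimpleGraph α} (f : α → W)
    (hf : Function.Bijective f) (hadj : ∀ i j, G.Adj (f i) (f j) ↔ G'.Adj i j) :
    Nonempty (G ≃g G') :=
  ⟨(⟨Equiv.ofBijective f hf, hadj _ _⟩ : G' ≃g G).symm⟩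

lemma SimpleGraph.nonempty_iso_top_fin_three (hall : ∀ y, y = a ∨ y = b ∨ y = c)
    (hab : G.Adj a b) (hac : G.Adj a c) (hbc : G.Adj b c) :
    Nonempty (G ≃g (⊤ : SimpleGraph (Fin 3))) := by
  refine G.nonempty_iso_of_bijective ![a, b, c] ⟨fun i j hij => ?_, fun y => ?_⟩ fun i j => ?_
  · fin_cases i <;> fin_cases j <;> simp_all [hab.ne, hac.ne, hbc.ne, hab.ne', hac.ne', hbc.ne']
  · rcases hall y with rfl | rfl | rfl
    exacts [⟨0, rfl⟩, ⟨1, rfl⟩, ⟨2, rfl⟩]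
  · fin_cases i <;> fin_cases j <;> simp [hab, hac, hbc, hab.symm, hac.symm, hbc.symm]

lemma SimpleGraph.nonempty_iso_diamond (hall : ∀ y, y = a ∨ y = b ∨ y = c ∨ y = d)
    (hab : a ≠ b) (hnab : ¬ G.Adj a b) (hac : G.Adj a c) (had : G.Adj a d) (hbc : G.Adj b c)
    (hbd : G.Adj b d) (hcd : G.Adj c d) : Nonempty (G ≃g diamond) := by
  refine G.nonempty_iso_of_bijective ![a, b, c, d] ⟨fun i j hij => ?_, fun y => ?_⟩
    fun i j => ?_
  · fin_cases i <;> fin_cases j <;>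
      simp_all [hac.ne, had.ne, hbc.ne, hbd.ne, hcd.ne, hac.ne', had.ne', hbc.ne', hbd.ne', hcd.ne']
  · rcases hall y with rfl | rfl | rfl | rfl
    exacts [⟨0, rfl⟩, ⟨1, rfl⟩, ⟨2, rfl⟩, ⟨3, rfl⟩]
  · fin_cases i <;> fin_cases j <;>
      simp [diamond, hnab, G.adj_comm b a, hac, had, hbc, hbd, hcd, hac.symm, had.symm, hbc.symm,
        hbd.symm, hcd.symm]

lemma SimpleGraph.Connected.forall_mem_or_exists_adj (hG : G.Connected) {C : Set W}
    (hx : x ∈ C) : (∀ y, y ∈ C) ∨ ∃ c ∈ C, ∃ q ∉ C, G.Adj c q := by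
  by_contra! h
  obtain ⟨y, hy⟩ := h.1
  obtain ⟨d, -, hd, hd'⟩ := (hG.preconnected x y).some.exists_boundary_dart C hx hy
  exact h.2 _ hd _ hd' d.adj

lemma SimpleGraph.exists_neighborSet_eq_pair (h : (G.neighborSet x).ncard = 2)
    (hxa : G.Adj x a) : ∃ b, a ≠ b ∧ G.neighborSet x = {a, b} := by
  obtain ⟨c, d, hcd, hN⟩ := Set.ncard_eq_two.1 h
  have ha : a ∈ G.neighborSet x := hxa
  rw [hN] at ha
  rcases ha with rfl | rfl
  exacts [⟨d, hcd, hN⟩, ⟨c, hcd.symm, hN.trans (Set.pair_comm c a)⟩]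

lemma SimpleGraph.neighborSet_eq_pair [Finite W] (h : (G.neighborSet x).ncard = 2)
    (hxa : G.Adj x a) (hxb : G.Adj x b) (hab : a ≠ b) : G.neighborSet x = {a, b} := by
  refine (Set.eq_of_subset_of_ncard_le ?_ ?_).symm
  · rintro y (rfl | rfl)
    exacts [hxa, hxb]
  · rw [h, Set.ncard_pair hab]

lemma SimpleGraph.exists_adj_ne_ne [Finite W] (h : 3 ≤ (G.neighborSet x).ncard)
    (a b : W) : ∃ c, G.Adj x c ∧ c ≠ a ∧ c ≠ b := by
  by_contra! hc
  have hsub : G.neighborSet x ⊆ {a, b} := fun c hxc => by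
    by_cases hca : c = a
    · exact .inl hca
    · exact .inr (hc c hxc hca)
  have := (Set.ncard_le_ncard hsub).trans (Set.ncard_insert_le a {b})
  simp only [Set.ncard_singleton] at this
  omega

end GraphFacts

section Counting
variable {W : Type*} {G : SimpleGraph W}

abbrev IsDegTwo (G : SimpleGraph W) (u : W) : Prop := (G.neighborSet u).ncard = 2

def IsExclusiveNeighbor (G : SimpleGraph W) (u x : W) : Prop :=
  G.Adj u x ∧ 3 ≤ (G.neighborSet x).ncard ∧ ∀ w, w ≠ u → IsDegTwo G w → ¬ G.Adj x w

def edgesAtDegTwo (G : SimpleGraph W) : Set (Sym2 W) :=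
  {e ∈ G.edgeSet | ∃ u v, e = s(u, v) ∧ (IsDegTwo G u ∨ IsDegTwo G v)}

lemma notMem_edgesAtDegTwo {a b : W} (ha : ¬ IsDegTwo G a) (hb : ¬ IsDegTwo G b) :
    s(a, b) ∉ edgesAtDegTwo G := by
  rintro ⟨-, u, v, huv, huv2⟩
  rcases Sym2.eq_iff.1 huv with ⟨rfl, rfl⟩ | ⟨rfl, rfl⟩ <;> tauto

noncomputable def degTwoFinset [Fintype W] (G : SimpleGraph W) : Finset W :=
  Finset.univ.filter (IsDegTwo G)

lemma mem_degTwoFinset [Fintype W] {u : W} : u ∈ degTwoFinset G ↔ IsDegTwo G u := by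
  simp [degTwoFinset]

structure DegTwoChoice (G : SimpleGraph W) where
  excl : W → W
  other : W → W
  extra : W → W
  neighborSet_eq {u} : IsDegTwo G u → G.neighborSet u = {excl u, other u}
  isExclusiveNeighbor {u} : IsDegTwo G u → IsExclusiveNeighbor G u (excl u)
  adj_excl_other {u} : IsDegTwo G u → G.Adj (excl u) (other u)
  adj_extra {u} : IsDegTwo G u → G.Adj (excl u) (extra u)
  extra_ne_self {u} : IsDegTwo G u → extra u ≠ u
  extra_ne_other {u} : IsDegTwo G u → extra u ≠ other u

lemma DegTwoChoice.nonempty [Finite W]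
    (hadj : ∀ u t r, G.neighborSet u = {t, r} → t ≠ r → G.Adj t r)
    (hexcl : ∀ u, IsDegTwo G u → ∃ x, IsExclusiveNeighbor G u x) :
    Nonempty (DegTwoChoice G) := by
  have key : ∀ u, ∃ x y c, IsDegTwo G u → G.neighborSet u = {x, y} ∧ x ≠ y ∧
      IsExclusiveNeighbor G u x ∧ G.Adj x c ∧ c ≠ u ∧ c ≠ y := by
    intro u
    by_cases hu : IsDegTwo G u
    · obtain ⟨x, hx⟩ := hexcl u hu
      obtain ⟨y, hxy, hN⟩ := G.exists_neighborSet_eq_pair hu hx.1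
      obtain ⟨c, hxc, hcu, hcy⟩ := G.exists_adj_ne_ne hx.2.1 u y
      exact ⟨x, y, c, fun _ => ⟨hN, hxy, hx, hxc, hcu, hcy⟩⟩
    · exact ⟨u, u, u, fun h => absurd h hu⟩
  choose x y c h using key
  exact ⟨⟨x, y, c, fun hu => (h _ hu).1, fun hu => (h _ hu).2.2.1,
    fun hu => hadj _ _ _ (h _ hu).1 (h _ hu).2.1, fun hu => (h _ hu).2.2.2.1,
    fun hu => (h _ hu).2.2.2.2.1, fun hu => (h _ hu).2.2.2.2.2⟩⟩

namespace DegTwoChoice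
variable (P : DegTwoChoice G) {u w : W}

lemma adj_excl (hu : IsDegTwo G u) : G.Adj u (P.excl u) := (P.isExclusiveNeighbor hu).1

lemma adj_other (hu : IsDegTwo G u) : G.Adj u (P.other u) := by
  simp [← SimpleGraph.mem_neighborSet, P.neighborSet_eq hu]

lemma not_isDegTwo_excl (hu : IsDegTwo G u) : ¬ IsDegTwo G (P.excl u) := fun h => by
  have := (P.isExclusiveNeighbor hu).2.1
  omega

lemma eq_of_adj_excl (hu : IsDegTwo G u) (hw : IsDegTwo G w) (h : G.Adj (P.excl u) w) :
    w = u :=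
  not_not.1 fun hwu => (P.isExclusiveNeighbor hu).2.2 w hwu hw h

lemma not_adj_of_isDegTwo (P : DegTwoChoice G) (hu : IsDegTwo G u) (hw : IsDegTwo G w) :
    ¬ G.Adj u w := by
  intro huw
  have hw' : w ∈ G.neighborSet u := huw
  rw [P.neighborSet_eq hu] at hw'
  rcases hw' with rfl | rfl
  · exact P.not_isDegTwo_excl hu hw
  · exact huw.ne' (P.eq_of_adj_excl hu hw (P.adj_excl_other hu))

lemma not_isDegTwo_other (hu : IsDegTwo G u) : ¬ IsDegTwo G (P.other u) :=
  fun h => P.not_adj_of_isDegTwo hu h (P.adj_other hu)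

lemma not_isDegTwo_extra (hu : IsDegTwo G u) : ¬ IsDegTwo G (P.extra u) :=
  fun h => P.extra_ne_self hu (P.eq_of_adj_excl hu h (P.adj_extra hu))

lemma excl_injOn : Set.InjOn P.excl {u | IsDegTwo G u} := fun _ hu _ hw h =>
  P.eq_of_adj_excl hw hu (h ▸ (P.adj_excl hu).symm)

lemma excl_ne_other (hu : IsDegTwo G u) (hw : IsDegTwo G w) : P.excl u ≠ P.other w := by
  intro h
  have hwu := P.eq_of_adj_excl hu hw (h ▸ (P.adj_other hw).symm)
  have hu' : IsDegTwo G u := hu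
  rw [IsDegTwo, P.neighborSet_eq hu, h, hwu, Set.pair_eq_singleton, Set.ncard_singleton] at hu'
  omega

section Finset
variable [Fintype W] [DecidableEq W]

lemma ncard_edgesAtDegTwo_le (P : DegTwoChoice G) :
    (edgesAtDegTwo G).ncard ≤ 2 * (degTwoFinset G).card := by
  set D := degTwoFinset G
  have key : ∀ {a b}, G.Adj a b → IsDegTwo G a →
      s(a, b) ∈ D.image (fun u => s(u, P.excl u)) ∪ D.image (fun u => s(u, P.other u)) := by
    intro a b hab ha
    have hb : b ∈ G.neighborSet a := hab
    rw [P.neighborSet_eq ha] at hb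
    rcases hb with rfl | rfl
    · exact Finset.mem_union_left _ (Finset.mem_image_of_mem _ (mem_degTwoFinset.2 ha))
    · exact Finset.mem_union_right _ (Finset.mem_image_of_mem _ (mem_degTwoFinset.2 ha))
  have hsub : edgesAtDegTwo G ⊆
      ↑(D.image (fun u => s(u, P.excl u)) ∪ D.image (fun u => s(u, P.other u))) := by
    rintro e ⟨he, u, v, rfl, hu | hv⟩
    · exact key he hu
    · exact Sym2.eq_swap ▸ key (G.adj_symm he) hv
  calc (edgesAtDegTwo G).ncard ≤ _ := Set.ncard_le_ncard hsub
    _ = _ := Set.ncard_coe_finset _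
    _ ≤ _ := (Finset.card_union_le _ _).trans
      (add_le_add Finset.card_image_le Finset.card_image_le)
    _ = 2 * D.card := (two_mul _).symm

lemma two_mul_card_degTwoFinset_lt (P : DegTwoChoice G) (hD : (degTwoFinset G).Nonempty) :
    2 * (degTwoFinset G).card < Fintype.card W := by
  obtain ⟨u, hu⟩ := hD
  rw [mem_degTwoFinset] at hu
  have hinj : Set.InjOn P.excl (degTwoFinset G) :=
    P.excl_injOn.mono fun w hw => mem_degTwoFinset.1 hw
  have hdisj : Disjoint (degTwoFinset G) ((degTwoFinset G).image P.excl) := by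
    simp only [Finset.disjoint_right, Finset.mem_image, mem_degTwoFinset]
    rintro _ ⟨w, hw, rfl⟩
    exact P.not_isDegTwo_excl hw
  have hother : P.other u ∉ degTwoFinset G ∪ (degTwoFinset G).image P.excl := by
    simp only [Finset.mem_union, Finset.mem_image, mem_degTwoFinset, not_or, not_exists, not_and]
    exact ⟨P.not_isDegTwo_other hu, fun w hw => P.excl_ne_other hw hu⟩
  calc 2 * (degTwoFinset G).card
      < (insert (P.other u) (degTwoFinset G ∪ (degTwoFinset G).image P.excl)).card := by
        rw [Finset.card_insert_of_notMem hother, Finset.card_union_of_disjoint hdisj,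
          Finset.card_image_of_injOn hinj]
        omega
    _ ≤ Fintype.card W := Finset.card_le_univ _

lemma card_image_excl_other :
    ((degTwoFinset G).image fun u => s(P.excl u, P.other u)).card = (degTwoFinset G).card := by
  refine Finset.card_image_of_injOn fun u hu w hw h => ?_
  rw [Finset.mem_coe, mem_degTwoFinset] at hu hw
  rcases Sym2.eq_iff.1 h with ⟨h, -⟩ | ⟨h, -⟩
  exacts [P.excl_injOn hu hw h, absurd h (P.excl_ne_other hu hw)]

lemma card_le_two_mul_card_image_excl_extra :
    (degTwoFinset G).card ≤
      2 * ((degTwoFinset G).image fun u => s(P.excl u, P.extra u)).card := by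
  refine Finset.card_le_mul_card_image _ 2 fun e he => ?_
  obtain ⟨u, -, rfl⟩ := Finset.mem_image.1 he
  calc _ ≤ ({P.excl u, P.extra u} : Finset W).card := by
        refine Finset.card_le_card_of_injOn P.excl (fun w hw => ?_) fun w hw w' hw' h => ?_
        · rcases Sym2.eq_iff.1 (Finset.mem_filter.1 hw).2 with ⟨h, -⟩ | ⟨h, -⟩ <;> simp [h]
        · exact P.excl_injOn (mem_degTwoFinset.1 (Finset.mem_filter.1 hw).1)
            (mem_degTwoFinset.1 (Finset.mem_filter.1 hw').1) h
    _ ≤ 2 := Finset.card_le_two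

lemma ncard_add_card_add_card_le : (edgesAtDegTwo G).ncard
    + ((degTwoFinset G).image fun u => s(P.excl u, P.other u)).card
    + ((degTwoFinset G).image fun u => s(P.excl u, P.extra u)).card ≤ G.edgeSet.ncard := by
  set B := (degTwoFinset G).image fun u => s(P.excl u, P.other u)
  set X := (degTwoFinset G).image fun u => s(P.excl u, P.extra u)
  have hB : ∀ e ∈ B, e ∈ G.edgeSet ∧ e ∉ edgesAtDegTwo G := by
    simp only [B, Finset.mem_image, mem_degTwoFinset]
    rintro _ ⟨u, hu, rfl⟩
    exact ⟨P.adj_excl_other hu,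
      notMem_edgesAtDegTwo (P.not_isDegTwo_excl hu) (P.not_isDegTwo_other hu)⟩
  have hX : ∀ e ∈ X, e ∈ G.edgeSet ∧ e ∉ edgesAtDegTwo G := by
    simp only [X, Finset.mem_image, mem_degTwoFinset]
    rintro _ ⟨u, hu, rfl⟩
    exact ⟨P.adj_extra hu,
      notMem_edgesAtDegTwo (P.not_isDegTwo_excl hu) (P.not_isDegTwo_extra hu)⟩
  have hBX : Disjoint B X := by
    simp only [B, X, Finset.disjoint_left, Finset.mem_image, mem_degTwoFinset, not_exists,
      not_and]
    rintro _ ⟨u, hu, rfl⟩ w hw h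
    rcases Sym2.eq_iff.1 h with ⟨h, h'⟩ | ⟨h, -⟩
    · obtain rfl := P.excl_injOn hw hu h
      exact P.extra_ne_other hw h'
    · exact P.excl_ne_other hw hu h
  have hdisj : Disjoint (edgesAtDegTwo G ∪ B) (X : Set (Sym2 W)) :=
    Set.disjoint_union_left.2 ⟨Set.disjoint_right.2 fun e he => (hX e he).2,
      Finset.disjoint_coe.2 hBX⟩
  calc _ = (edgesAtDegTwo G ∪ B ∪ X).ncard := by
        rw [Set.ncard_union_eq hdisj, Set.ncard_union_eq
          (Set.disjoint_right.2 fun e he => (hB e he).2), Set.ncard_coe_finset,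
          Set.ncard_coe_finset]
    _ ≤ G.edgeSet.ncard := Set.ncard_le_ncard (Set.union_subset (Set.union_subset
        (fun e he => he.1) fun e he => (hB e he).1) fun e he => (hX e he).1)

theorem ncard_edgesAtDegTwo_le_card_sub_one (P : DegTwoChoice G) :
    (edgesAtDegTwo G).ncard ≤ Nat.card W - 1 := by
  rw [Nat.card_eq_fintype_card]
  have hE := P.ncard_edgesAtDegTwo_le
  rcases (degTwoFinset G).eq_empty_or_nonempty with hD | hD
  · rw [hD, Finset.card_empty] at hE
    omega
  · have := P.two_mul_card_degTwoFinset_lt hD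
    omega

theorem seven_mul_ncard_edgesAtDegTwo_le (P : DegTwoChoice G) :
    7 * (edgesAtDegTwo G).ncard ≤ 4 * G.edgeSet.ncard := by
  have := P.ncard_edgesAtDegTwo_le
  have := P.card_image_excl_other
  have := P.card_le_two_mul_card_image_excl_extra
  have := P.ncard_add_card_add_card_le
  omega

end Finset

end DegTwoChoice

end Counting

section StarGraph
variable {V : Type*} {H : SimpleGraph V} {S T R A Q W : ↥(maxStars H)} {v : V}

lemma starGraph_adj_iff :
    (_root_.starGraph H).Adj S T ↔ S ≠ T ∧ ((S : Set V) ∩ T).Nonempty := by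
  rw [_root_.starGraph, SimpleGraph.fromRel_adj, Set.inter_comm (T : Set V), or_self]

lemma disjoint_of_not_adj (hST : S ≠ T) (h : ¬ (_root_.starGraph H).Adj S T) :
    Disjoint (S : Set V) T :=
  not_not.1 fun hnd => h (starGraph_adj_iff.2 ⟨hST, Set.not_disjoint_iff_nonempty_inter.1 hnd⟩)

lemma not_adj_of_disjoint (h : Disjoint (S : Set V) T) : ¬ (_root_.starGraph H).Adj S T :=
  fun hST => (starGraph_adj_iff.1 hST).2.not_disjoint h

lemma disjoint_of_neighborSet_subset {C : Set ↥(maxStars H)} (hS : S ∈ C)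
    (hNS : (_root_.starGraph H).neighborSet S ⊆ C) (hQ : Q ∉ C) : Disjoint (Q : Set V) S :=
  disjoint_of_not_adj (fun h => hQ (h ▸ hS)) fun h => hQ (hNS h.symm)

lemma degTwoStar_of_neighborSet_eq (hN : (_root_.starGraph H).neighborSet S = {T, R}) :
    DegTwoStar H S T R := by
  have hmem : ∀ {M}, M ∈ (_root_.starGraph H).neighborSet S → ((M : Set V) ∩ S).Nonempty :=
    fun hM => Set.inter_comm (S : Set V) _ ▸ (starGraph_adj_iff.1 hM).2
  refine ⟨S.2, T.2, R.2, hmem (by simp [hN]), hmem (by simp [hN]), fun M hM hMS => ?_⟩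
  by_cases hMS' : (⟨M, hM⟩ : ↥(maxStars H)) = S
  · exact .inl (congrArg Subtype.val hMS')
  · have hadj : (⟨M, hM⟩ : ↥(maxStars H)) ∈ (_root_.starGraph H).neighborSet S :=
      starGraph_adj_iff.2 ⟨Ne.symm hMS', Set.inter_comm (S : Set V) M ▸ hMS⟩
    rw [hN] at hadj
    rcases hadj with h | h
    exacts [.inr (.inl (congrArg Subtype.val h)), .inr (.inr (congrArg Subtype.val h))]

variable [Finite V]

lemma starGraph_adj_of_neighborSet_eq (hN : (_root_.starGraph H).neighborSet S = {T, R})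
    (hTR : T ≠ R) : (_root_.starGraph H).Adj T R :=
  starGraph_adj_iff.2 ⟨hTR, (degTwoStar_of_neighborSet_eq hN).inter_nonempty⟩

lemma not_adj_of_ncard_eq_two (hconn : (_root_.starGraph H).Connected)
    (hnt : ¬ Nonempty (_root_.starGraph H ≃g (⊤ : SimpleGraph (Fin 3))))
    (hS : ((_root_.starGraph H).neighborSet S).ncard = 2)
    (hT : ((_root_.starGraph H).neighborSet T).ncard = 2) : ¬ (_root_.starGraph H).Adj S T := by
  intro hST
  obtain ⟨R, hTR, hNS⟩ := (_root_.starGraph H).exists_neighborSet_eq_pair hS hST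
  have hSR : (_root_.starGraph H).Adj S R := by simp [← SimpleGraph.mem_neighborSet, hNS]
  have hTR' : (_root_.starGraph H).Adj T R := starGraph_adj_of_neighborSet_eq hNS hTR
  have hNT : (_root_.starGraph H).neighborSet T = {S, R} :=
    (_root_.starGraph H).neighborSet_eq_pair hT hST.symm hTR' hSR.ne
  have hNS' : (_root_.starGraph H).neighborSet S ⊆ {S, T, R} := hNS ▸ Set.subset_insert _ _
  have hNT' : (_root_.starGraph H).neighborSet T ⊆ {S, T, R} :=
    hNT ▸ Set.insert_subset_insert (Set.subset_insert _ _)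
  rcases hconn.forall_mem_or_exists_adj (Set.mem_insert S {T, R}) with
    hall | ⟨c, hc, Q, hQ, hcQ⟩
  · exact hnt ((_root_.starGraph H).nonempty_iso_top_fin_three hall hST hSR hTR')
  have hQR : Disjoint (Q : Set V) R :=
    (degTwoStar_of_neighborSet_eq hNS).disjoint_of_swap (degTwoStar_of_neighborSet_eq hNT) Q.2
      (Set.disjoint_union_right.2 ⟨disjoint_of_neighborSet_subset (by simp) hNS' hQ,
        disjoint_of_neighborSet_subset (by simp) hNT' hQ⟩)
  rcases hc with rfl | rfl | rfl
  exacts [hQ (hNS' hcQ), hQ (hNT' hcQ), not_adj_of_disjoint hQR.symm hcQ]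

lemma false_of_twins (hconn : (_root_.starGraph H).Connected)
    (hnd : ¬ Nonempty (_root_.starGraph H ≃g diamond))
    (hNS : (_root_.starGraph H).neighborSet S = {T, R})
    (hNA : (_root_.starGraph H).neighborSet A = {T, R}) (hTR : T ≠ R) (hSA : S ≠ A)
    (hnadj : ¬ (_root_.starGraph H).Adj S A) : False := by
  have hST : (_root_.starGraph H).Adj S T := by simp [← SimpleGraph.mem_neighborSet, hNS]
  have hSR : (_root_.starGraph H).Adj S R := by simp [← SimpleGraph.mem_neighborSet, hNS]
  have hAT : (_root_.starGraph H).Adj A T := by simp [← SimpleGraph.mem_neighborSet, hNA]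
  have hAR : (_root_.starGraph H).Adj A R := by simp [← SimpleGraph.mem_neighborSet, hNA]
  have hsub : ({T, R} : Set ↥(maxStars H)) ⊆ {S, A, T, R} :=
    (Set.subset_insert _ _).trans (Set.subset_insert _ _)
  have hNS' : (_root_.starGraph H).neighborSet S ⊆ {S, A, T, R} := hNS ▸ hsub
  have hNA' : (_root_.starGraph H).neighborSet A ⊆ {S, A, T, R} := hNA ▸ hsub
  rcases hconn.forall_mem_or_exists_adj (Set.mem_insert S {A, T, R}) with
    hall | ⟨c, hc, Q, hQ, hcQ⟩
  · exact hnd ((_root_.starGraph H).nonempty_iso_diamond hall hSA hnadj hST hSR hAT hAR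
      (starGraph_adj_of_neighborSet_eq hNS hTR))
  have htwin : TwinStars H S A T R := ⟨degTwoStar_of_neighborSet_eq hNS,
    degTwoStar_of_neighborSet_eq hNA, disjoint_of_not_adj hSA hnadj⟩
  have hQTR : Disjoint (Q : Set V) (T ∪ R) := htwin.disjoint_union Q.2
    (Set.disjoint_union_right.2 ⟨disjoint_of_neighborSet_subset (by simp) hNS' hQ,
      disjoint_of_neighborSet_subset (by simp) hNA' hQ⟩)
  rw [Set.disjoint_union_right] at hQTR
  rcases hc with rfl | rfl | rfl | rfl
  exacts [hQ (hNS' hcQ), hQ (hNA' hcQ), not_adj_of_disjoint hQTR.1.symm hcQ,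
    not_adj_of_disjoint hQTR.2.symm hcQ]

lemma three_le_ncard_neighborSet (hconn : (_root_.starGraph H).Connected)
    (hnt : ¬ Nonempty (_root_.starGraph H ≃g (⊤ : SimpleGraph (Fin 3))))
    (hNS : (_root_.starGraph H).neighborSet S = {T, R}) (hTR : T ≠ R) :
    3 ≤ ((_root_.starGraph H).neighborSet T).ncard := by
  by_contra! h
  have hST : (_root_.starGraph H).Adj S T := by simp [← SimpleGraph.mem_neighborSet, hNS]
  have hSR : (_root_.starGraph H).Adj S R := by simp [← SimpleGraph.mem_neighborSet, hNS]
  have hsub : {S, R} ⊆ (_root_.starGraph H).neighborSet T := by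
    rintro x (rfl | rfl)
    exacts [hST.symm, starGraph_adj_of_neighborSet_eq hNS hTR]
  have h2 := Set.ncard_pair hSR.ne ▸ Set.ncard_le_ncard hsub
  exact not_adj_of_ncard_eq_two hconn hnt (by rw [hNS, Set.ncard_pair hTR]) (by omega) hST

lemma not_adj_of_center_mem (hconn : (_root_.starGraph H).Connected)
    (hnd : ¬ Nonempty (_root_.starGraph H ≃g diamond))
    (hnt : ¬ Nonempty (_root_.starGraph H ≃g (⊤ : SimpleGraph (Fin 3))))
    (hNS : (_root_.starGraph H).neighborSet S = {T, R}) (hTR : T ≠ R)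
    (hv : IsStarCenter H v S) (hvT : v ∈ (T : Set V)) (hWS : W ≠ S)
    (hW : ((_root_.starGraph H).neighborSet W).ncard = 2) : ¬ (_root_.starGraph H).Adj T W := by
  intro hTW
  have hS : ((_root_.starGraph H).neighborSet S).ncard = 2 := by rw [hNS, Set.ncard_pair hTR]
  by_cases hSW : (_root_.starGraph H).Adj S W
  · have hW' : W ∈ (_root_.starGraph H).neighborSet S := hSW
    rw [hNS] at hW'
    rcases hW' with rfl | rfl
    · exact (_root_.starGraph H).irrefl hTW
    · exact not_adj_of_ncard_eq_two hconn hnt hS hW hSW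
  by_cases hWR : (_root_.starGraph H).Adj W R
  · exact false_of_twins hconn hnd hNS
      ((_root_.starGraph H).neighborSet_eq_pair hW hTW.symm hWR hTR) hTR hWS.symm hSW
  · have hWR' : W ≠ R := by
      rintro rfl
      exact hSW (by simp [← SimpleGraph.mem_neighborSet, hNS])
    exact not_adj_of_disjoint ((degTwoStar_of_neighborSet_eq hNS).disjoint_of_center_mem hv hvT
      W.2 (disjoint_of_not_adj hWS (hSW ∘ .symm)) (disjoint_of_not_adj hWR' hWR)).symm hTW

lemma exists_isExclusiveNeighbor (hconn : (_root_.starGraph H).Connected)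
    (hnd : ¬ Nonempty (_root_.starGraph H ≃g diamond))
    (hnt : ¬ Nonempty (_root_.starGraph H ≃g (⊤ : SimpleGraph (Fin 3))))
    (hS : ((_root_.starGraph H).neighborSet S).ncard = 2) :
    ∃ X, IsExclusiveNeighbor (_root_.starGraph H) S X := by
  obtain ⟨T, R, hTR, hNS⟩ := Set.ncard_eq_two.1 hS
  obtain ⟨v, hv⟩ := exists_isStarCenter S.2
  have key : ∀ {T R}, (_root_.starGraph H).neighborSet S = {T, R} → T ≠ R →
      v ∈ (T : Set V) → IsExclusiveNeighbor (_root_.starGraph H) S T := fun hNS hTR hvT =>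
    ⟨by simp [← SimpleGraph.mem_neighborSet, hNS], three_le_ncard_neighborSet hconn hnt hNS hTR,
      fun _ hWS hW => not_adj_of_center_mem hconn hnd hnt hNS hTR hv hvT hWS hW⟩
  rcases (degTwoStar_of_neighborSet_eq hNS).center_mem hv with hvT | hvR
  · exact ⟨T, key hNS hTR hvT⟩
  · exact ⟨R, key (hNS.trans (Set.pair_comm T R)) hTR.symm hvR⟩

end StarGraph

/-- For a connected star graph `G` not isomorphic to a diamond or a triangle, the set
`E₂(G)` of edges incident to a degree-two vertex satisfies
`|E₂(G)| ≤ min (|V(G)| - 1) ((4/7)|E(G)|)`. -/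
theorem stmt16 {V : Type*} [Fintype V] (H : SimpleGraph V)
    (hconn : (_root_.starGraph H).Connected)
    (hnd : ¬ Nonempty (_root_.starGraph H ≃g diamond))
    (hnt : ¬ Nonempty (_root_.starGraph H ≃g (⊤ : SimpleGraph (Fin 3)))) :
    ({e ∈ (_root_.starGraph H).edgeSet | ∃ u v : ↥(maxStars H), e = s(u, v) ∧
        (((_root_.starGraph H).neighborSet u).ncard = 2 ∨
          ((_root_.starGraph H).neighborSet v).ncard = 2)}.ncard
        ≤ (maxStars H).ncard - 1) ∧
      7 * ({e ∈ (_root_.starGraph H).edgeSet | ∃ u v : ↥(maxStars H), e = s(u, v) ∧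
        (((_root_.starGraph H).neighborSet u).ncard = 2 ∨
          ((_root_.starGraph H).neighborSet v).ncard = 2)}.ncard)
        ≤ 4 * (_root_.starGraph H).edgeSet.ncard := by
  classical
  have : Fintype ↥(maxStars H) := Fintype.ofFinite _
  obtain ⟨P⟩ := DegTwoChoice.nonempty (fun _ _ _ => starGraph_adj_of_neighborSet_eq)
    (fun _ hS => exists_isExclusiveNeighbor hconn hnd hnt hS)
  rw [← Nat.card_coe_set_eq]
  exact ⟨P.ncard_edgesAtDegTwo_le_card_sub_one, P.seven_mul_ncard_edgesAtDegTwo_le⟩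
end
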